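/- arXiv:1706.05747 — 7 statements merged into one kernel-verified Lean document; each statement's English description precedes it below -/
import Mathlib

section
/- Let μ be a nonzero σ-finite measure on (0,∞) with ∫₀^∞ (r ∧ r²) μ(dr) < ∞, let N ≥ 1 be an integer, set L(u) = ∫₀^∞ (e^{−ur} − 1 + ur) μ(dr) and d_{1,N} = ∫₀^∞ r(1 − e^{−Nr}) μ(dr), and assume d_{1,N} > 0. Define f_{1,N}(s) = s + (N d_{1,N})^{−1} L(N(1−s)) for s ∈ [0,1]. Then f_{1,N} is a probability generating function; more precisely, for all s ∈ [0,1], f_{1,N}(s) = ∑_{k≥0} q_k^{1,N} s^k, where q_0^{1,N} = L(N)/(N d_{1,N}), q_1^{1,N} = 0, and q_k^{1,N} = (1/(k! N d_{1,N})) ∫₀^∞ (Nr)^k e^{−Nr} μ(dr) for k ≥ 2; every q_k^{1,N} ≥ 0 and ∑_{k≥0} q_k^{1,N} = 1. -/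
open MeasureTheory

lemma aux_exp_nonneg (x : ℝ) : 0 ≤ Real.exp (-x) - 1 + x := by
  nlinarith [Real.add_one_le_exp (-x)]

lemma aux_exp_le (x : ℝ) (hx : 0 ≤ x) : Real.exp (-x) - 1 + x ≤ min x (x ^ 2) := by
  have h1 : Real.exp (-x) ≤ 1 := Real.exp_le_one_iff.mpr (by linarith)
  have h2 : Real.exp (-x) * Real.exp x = 1 := by rw [← Real.exp_add]; simp
  have h3 : x + 1 ≤ Real.exp x := Real.add_one_le_exp x
  have h4 : 0 < Real.exp (-x) := Real.exp_pos _
  refine le_min (by linarith) ?_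
  nlinarith

lemma aux_min_le (a b r : ℝ) (ha : 0 ≤ a) (hab : a ≤ b) (hb : 1 ≤ b) (hr : 0 ≤ r) :
    min (a * r) ((a * r) ^ 2) ≤ b ^ 2 * min r (r ^ 2) := by
  rcases le_total r 1 with h | h
  · rw [min_eq_right (by nlinarith : r ^ 2 ≤ r)]
    calc min (a * r) ((a * r) ^ 2) ≤ (a * r) ^ 2 := min_le_right _ _
    _ ≤ b ^ 2 * r ^ 2 := by
        have h2 : a ^ 2 ≤ b ^ 2 := by nlinarith
        nlinarith [mul_le_mul_of_nonneg_right h2 (sq_nonneg r)]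
  · rw [min_eq_left (by nlinarith : r ≤ r ^ 2)]
    calc min (a * r) ((a * r) ^ 2) ≤ a * r := min_le_left _ _
    _ ≤ b ^ 2 * r := by
        have hb2 : b ≤ b ^ 2 := by nlinarith
        nlinarith [mul_le_mul_of_nonneg_right hab hr, mul_le_mul_of_nonneg_right hb2 hr]

lemma aux_pow_exp (k : ℕ) (hk : 2 ≤ k) (x : ℝ) (hx : 0 ≤ x) :
    x ^ k * Real.exp (-x) ≤ (Nat.factorial k : ℝ) * min x (x ^ 2) := by
  have hfac : (1 : ℝ) ≤ (Nat.factorial k : ℝ) := by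
    exact_mod_cast Nat.one_le_iff_ne_zero.mpr (Nat.factorial_ne_zero k)
  have h1 : Real.exp (-x) ≤ 1 := Real.exp_le_one_iff.mpr (by linarith)
  have h4 : 0 < Real.exp (-x) := Real.exp_pos _
  rcases le_total x 1 with h | h
  · rw [min_eq_right (by nlinarith : x ^ 2 ≤ x)]
    have hxk : x ^ k ≤ x ^ 2 := pow_le_pow_of_le_one hx h hk
    nlinarith [pow_nonneg hx k]
  · rw [min_eq_left (by nlinarith : x ≤ x ^ 2)]
    have hsum : x ^ k / (Nat.factorial k : ℝ) ≤ Real.exp x := by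
      calc x ^ k / (Nat.factorial k : ℝ)
          ≤ ∑ i ∈ Finset.range (k + 1), x ^ i / (Nat.factorial i : ℝ) :=
            Finset.single_le_sum (f := fun i => x ^ i / (Nat.factorial i : ℝ))
              (fun i _ => by positivity) (Finset.self_mem_range_succ k)
      _ ≤ Real.exp x := Real.sum_le_exp_of_nonneg hx _
    have h2 : Real.exp (-x) * Real.exp x = 1 := by rw [← Real.exp_add]; simp
    have hfpos : (0:ℝ) < (Nat.factorial k : ℝ) := by linarith
    have hle : x ^ k ≤ (Nat.factorial k : ℝ) * Real.exp x := by
      rw [div_le_iff₀ hfpos] at hsum; linarith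
    nlinarith [Real.exp_pos x]

lemma aux_tail_nonneg (x s : ℝ) : 0 ≤ (Real.exp (s * x) - 1 - s * x) * Real.exp (-x) := by
  have := Real.add_one_le_exp (s * x)
  have := Real.exp_pos (-x)
  nlinarith

lemma aux_tail_le (x s : ℝ) (hx : 0 ≤ x) (hs0 : 0 ≤ s) (hs1 : s ≤ 1) :
    (Real.exp (s * x) - 1 - s * x) * Real.exp (-x) ≤ min x (x ^ 2) := by
  have hmono : Real.exp (s * x) - 1 - s * x ≤ Real.exp x - 1 - x := by
    have he : Real.exp x = Real.exp (s * x) * Real.exp ((1 - s) * x) := by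
      rw [← Real.exp_add]; ring_nf
    have h2 : (1 - s) * x + 1 ≤ Real.exp ((1 - s) * x) := Real.add_one_le_exp _
    have h3 : 1 ≤ Real.exp (s * x) := Real.one_le_exp (by positivity)
    have h4 : 0 ≤ (1 - s) * x := mul_nonneg (by linarith) hx
    have h5 : Real.exp (s * x) * ((1 - s) * x + 1) ≤ Real.exp (s * x) * Real.exp ((1 - s) * x) :=
      mul_le_mul_of_nonneg_left h2 (by linarith)
    nlinarith
  have hE : 1 - x ≤ Real.exp (-x) := by nlinarith [Real.add_one_le_exp (-x)]
  have hEpos : 0 < Real.exp (-x) := Real.exp_pos _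
  have h2 : Real.exp (-x) * Real.exp x = 1 := by rw [← Real.exp_add]; simp
  have key : (Real.exp x - 1 - x) * Real.exp (-x) = 1 - (1 + x) * Real.exp (-x) := by
    nlinarith
  have hle : (Real.exp (s * x) - 1 - s * x) * Real.exp (-x) ≤ 1 - (1 + x) * Real.exp (-x) := by
    rw [← key]; exact mul_le_mul_of_nonneg_right hmono hEpos.le
  refine le_trans hle (le_min ?_ ?_)
  · rcases le_total x 1 with h | h
    · nlinarith
    · nlinarith
  · nlinarith

lemma aux_tsum_tail (x c : ℝ) :
    ∑' k : ℕ, (if 2 ≤ k then x ^ k / (Nat.factorial k : ℝ) * c else 0)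
      = (Real.exp x - 1 - x) * c := by
  have hs : Summable (fun k : ℕ => x ^ k / (Nat.factorial k : ℝ) * c) :=
    (Real.summable_pow_div_factorial x).mul_right c
  set h : ℕ → ℝ := fun k => x ^ k / (Nat.factorial k : ℝ) * c with hh
  set g : ℕ → ℝ := fun k => if 2 ≤ k then h k else 0 with hg
  have hgsh : (fun k : ℕ => g (k + 2)) = fun k : ℕ => h (k + 2) := by
    funext k; simp [hg]
  have hgsum : Summable g := by
    rw [← summable_nat_add_iff 2, hgsh, summable_nat_add_iff 2]
    exact hs
  have e1 : ∑ i ∈ Finset.range 2, g i + ∑' k, g (k + 2) = ∑' k, g k :=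
    Summable.sum_add_tsum_nat_add 2 hgsum
  have e2 : ∑ i ∈ Finset.range 2, h i + ∑' k, h (k + 2) = ∑' k, h k :=
    Summable.sum_add_tsum_nat_add 2 hs
  have hexp : Real.exp x = ∑' n : ℕ, x ^ n / (Nat.factorial n : ℝ) := by
    rw [Real.exp_eq_exp_ℝ, NormedSpace.exp_eq_tsum_div]
  have hth : ∑' k, h k = Real.exp x * c := by
    rw [hexp, ← tsum_mul_right]
  have hr0 : ∑ i ∈ Finset.range 2, g i = 0 := by
    rw [Finset.sum_range_succ, Finset.sum_range_one]
    simp [hg]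
  have hr1 : ∑ i ∈ Finset.range 2, h i = c + x * c := by
    rw [Finset.sum_range_succ, Finset.sum_range_one]
    simp [hh]
  have e3 : ∑' k, g (k + 2) = ∑' k, h (k + 2) := by rw [hgsh]
  show ∑' k, g k = _
  rw [← e1, hr0, zero_add, e3]
  have e4 : ∑' k, h (k + 2) = ∑' k, h k - (c + x * c) := by rw [← e2, hr1]; ring
  rw [e4, hth]; ring


lemma aux_summable_tail (x c : ℝ) :
    Summable (fun k : ℕ => if 2 ≤ k then x ^ k / (Nat.factorial k : ℝ) * c else 0) := by
  have hs : Summable (fun k : ℕ => x ^ k / (Nat.factorial k : ℝ) * c) :=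
    (Real.summable_pow_div_factorial x).mul_right c
  rw [← summable_nat_add_iff 2]
  refine (summable_nat_add_iff 2).mpr hs |>.congr fun k => ?_
  simp



/-- With `μ` a nonzero σ-finite measure on `(0,∞)` with
`∫ (r ∧ r²) μ(dr) < ∞`, `N ≥ 1`, `L(u) = ∫ (e^{-ur} - 1 + ur) μ(dr)`,
`d_{1,N} = ∫ r (1 - e^{-Nr}) μ(dr) > 0`, the function
`f_{1,N}(s) = s + (N d_{1,N})⁻¹ L(N(1-s))` is a probability generating function:
`f_{1,N}(s) = ∑_k q_k s^k` on `[0,1]` with the stated nonnegative coefficients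
summing to `1`. -/
theorem stmt2 (μ : Measure ℝ) [SigmaFinite μ]
    (hμ : Integrable (fun r => min r (r ^ 2)) (μ.restrict (Set.Ioi 0)))
    (hμne : μ.restrict (Set.Ioi 0) ≠ 0)
    (N : ℕ) (hN : 1 ≤ N)
    (L : ℝ → ℝ)
    (hL : ∀ u : ℝ, L u = ∫ r in Set.Ioi (0:ℝ), (Real.exp (-u * r) - 1 + u * r) ∂μ)
    (d1N : ℝ)
    (hd1N : d1N = ∫ r in Set.Ioi (0:ℝ), r * (1 - Real.exp (-(N:ℝ) * r)) ∂μ)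
    (hd1Npos : 0 < d1N)
    (f : ℝ → ℝ)
    (hf : ∀ s : ℝ, f s = s + ((N:ℝ) * d1N)⁻¹ * L ((N:ℝ) * (1 - s)))
    (q : ℕ → ℝ)
    (hq0 : q 0 = L (N:ℝ) / ((N:ℝ) * d1N))
    (hq1 : q 1 = 0)
    (hqk : ∀ k : ℕ, 2 ≤ k → q k =
      (1 / ((Nat.factorial k : ℝ) * N * d1N)) *
        ∫ r in Set.Ioi (0:ℝ), ((N:ℝ) * r) ^ k * Real.exp (-(N:ℝ) * r) ∂μ) :
    (∀ s ∈ Set.Icc (0:ℝ) 1, f s = ∑' k : ℕ, q k * s ^ k) ∧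
    (∀ k : ℕ, 0 ≤ q k) ∧ (∑' k : ℕ, q k) = 1 := by
  have hnR : (1:ℝ) ≤ (N:ℝ) := by exact_mod_cast hN
  have hD : (0:ℝ) < (N:ℝ) * d1N := mul_pos (by linarith) hd1Npos
  have hDne : ((N:ℝ) * d1N) ≠ 0 := ne_of_gt hD
  set ν := μ.restrict (Set.Ioi 0) with hν
  -- domination principle
  have hdom : ∀ (C : ℝ) (h : ℝ → ℝ), AEStronglyMeasurable h ν →
      (∀ r : ℝ, 0 < r → ‖h r‖ ≤ C * min r (r ^ 2)) → Integrable h ν := by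
    intro C h hm hb
    refine (hμ.const_mul C).mono' hm ?_
    filter_upwards [ae_restrict_mem measurableSet_Ioi] with r hr
    exact hb r hr
  -- integrability of the L-integrand
  have intL : ∀ u : ℝ, 0 ≤ u →
      Integrable (fun r => Real.exp (-u * r) - 1 + u * r) ν := by
    intro u hu
    refine hdom ((1 + u) ^ 2) _ (Continuous.aestronglyMeasurable (by fun_prop)) ?_
    intro r hr
    have hx : 0 ≤ u * r := mul_nonneg hu hr.le
    have hneg : -u * r = -(u * r) := by ring
    rw [hneg, Real.norm_eq_abs, abs_of_nonneg (aux_exp_nonneg _)]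
    calc Real.exp (-(u * r)) - 1 + u * r ≤ min (u * r) ((u * r) ^ 2) := aux_exp_le _ hx
    _ ≤ (1 + u) ^ 2 * min r (r ^ 2) :=
        aux_min_le u (1 + u) r hu (by linarith) (by linarith) hr.le
  -- integrability of the d1N integrand
  have intD : Integrable (fun r => r * (1 - Real.exp (-(N:ℝ) * r))) ν := by
    refine hdom ((N:ℝ) ^ 2) _ (Continuous.aestronglyMeasurable (by fun_prop)) ?_
    intro r hr
    have hx : 0 ≤ (N:ℝ) * r := by positivity
    have h1 : Real.exp (-((N:ℝ) * r)) ≤ 1 := Real.exp_le_one_iff.mpr (by linarith)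
    have h2 : 1 - (N:ℝ) * r ≤ Real.exp (-((N:ℝ) * r)) := by
      nlinarith [Real.add_one_le_exp (-((N:ℝ) * r))]
    have hneg : -(N:ℝ) * r = -((N:ℝ) * r) := by ring
    have hep : 0 ≤ Real.exp (-((N:ℝ) * r)) := (Real.exp_pos _).le
    rw [hneg, Real.norm_eq_abs, abs_of_nonneg (by nlinarith)]
    rcases le_total r 1 with h | h
    · rw [min_eq_right (by nlinarith : r ^ 2 ≤ r)]
      have h3 : r * (1 - Real.exp (-((N:ℝ) * r))) ≤ r * ((N:ℝ) * r) :=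
        mul_le_mul_of_nonneg_left (by linarith) hr.le
      nlinarith [sq_nonneg r, mul_le_mul_of_nonneg_right hnR (sq_nonneg r)]
    · rw [min_eq_left (by nlinarith : r ≤ r ^ 2)]
      have h3 : r * (1 - Real.exp (-((N:ℝ) * r))) ≤ r * 1 :=
        mul_le_mul_of_nonneg_left (by linarith) hr.le
      nlinarith [mul_le_mul_of_nonneg_right (by nlinarith : (1:ℝ) ≤ (N:ℝ) ^ 2) hr.le]
  -- integrability of the k-th moment integrand
  have intK : ∀ k : ℕ, 2 ≤ k →
      Integrable (fun r => ((N:ℝ) * r) ^ k * Real.exp (-(N:ℝ) * r)) ν := by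
    intro k hk
    refine hdom ((Nat.factorial k : ℝ) * (N:ℝ) ^ 2) _
      (Continuous.aestronglyMeasurable (by fun_prop)) ?_
    intro r hr
    have hx : 0 ≤ (N:ℝ) * r := mul_nonneg (by linarith) hr.le
    have hneg : -(N:ℝ) * r = -((N:ℝ) * r) := by ring
    rw [hneg, Real.norm_eq_abs,
      abs_of_nonneg (mul_nonneg (pow_nonneg hx k) (Real.exp_pos _).le)]
    calc ((N:ℝ) * r) ^ k * Real.exp (-((N:ℝ) * r))
        ≤ (Nat.factorial k : ℝ) * min ((N:ℝ) * r) (((N:ℝ) * r) ^ 2) :=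
          aux_pow_exp k hk _ hx
    _ ≤ (Nat.factorial k : ℝ) * ((N:ℝ) ^ 2 * min r (r ^ 2)) := by
        have h5 := aux_min_le (N:ℝ) (N:ℝ) r (by linarith) le_rfl hnR hr.le
        exact mul_le_mul_of_nonneg_left h5 (Nat.cast_nonneg _)
    _ = ((Nat.factorial k : ℝ) * (N:ℝ) ^ 2) * min r (r ^ 2) := by ring
  -- PART 1 : the generating function identity
  have part1 : ∀ s ∈ Set.Icc (0:ℝ) 1, f s = ∑' k : ℕ, q k * s ^ k := by
    rintro s ⟨hs0, hs1⟩
    set g : ℕ → ℝ → ℝ := fun k r =>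
      if 2 ≤ k then (s * ((N:ℝ) * r)) ^ k / (Nat.factorial k : ℝ) * Real.exp (-(N:ℝ) * r)
      else 0 with hgdef
    have htail : ∀ r : ℝ, ∑' k, g k r
        = (Real.exp (s * ((N:ℝ) * r)) - 1 - s * ((N:ℝ) * r)) * Real.exp (-(N:ℝ) * r) :=
      fun r => aux_tsum_tail _ _
    have hgsum : ∀ r : ℝ, Summable (fun k => g k r) := fun r => aux_summable_tail _ _
    have hgnonneg : ∀ (k : ℕ) (r : ℝ), 0 < r → 0 ≤ g k r := by
      intro k r hr
      simp only [hgdef]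
      split
      · have hx : 0 ≤ s * ((N:ℝ) * r) := mul_nonneg hs0 (mul_nonneg (by linarith) hr.le)
        exact mul_nonneg (div_nonneg (pow_nonneg hx _) (Nat.cast_nonneg _)) (Real.exp_pos _).le
      · exact le_rfl
    have intg : ∀ k : ℕ, Integrable (fun r => g k r) ν := by
      intro k
      by_cases hk : 2 ≤ k
      · simp only [hgdef, if_pos hk]
        have e : (fun r => (s * ((N:ℝ) * r)) ^ k / (Nat.factorial k : ℝ)
              * Real.exp (-(N:ℝ) * r))
            = fun r => (s ^ k / (Nat.factorial k : ℝ))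
              * (((N:ℝ) * r) ^ k * Real.exp (-(N:ℝ) * r)) := by
          funext r; rw [mul_pow]; ring
        rw [e]
        exact (intK k hk).const_mul _
      · simp only [hgdef, if_neg hk]
        exact integrable_zero _ _ _
    -- the tail function
    have intT : Integrable (fun r =>
        (Real.exp (s * ((N:ℝ) * r)) - 1 - s * ((N:ℝ) * r)) * Real.exp (-(N:ℝ) * r)) ν := by
      refine hdom ((N:ℝ) ^ 2) _ (Continuous.aestronglyMeasurable (by fun_prop)) ?_
      intro r hr
      have hx : 0 ≤ (N:ℝ) * r := mul_nonneg (by linarith) hr.le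
      have hneg : -(N:ℝ) * r = -((N:ℝ) * r) := by ring
      rw [hneg, Real.norm_eq_abs, abs_of_nonneg (aux_tail_nonneg _ _)]
      calc (Real.exp (s * ((N:ℝ) * r)) - 1 - s * ((N:ℝ) * r)) * Real.exp (-((N:ℝ) * r))
          ≤ min ((N:ℝ) * r) (((N:ℝ) * r) ^ 2) := aux_tail_le _ s hx hs0 hs1
      _ ≤ (N:ℝ) ^ 2 * min r (r ^ 2) := aux_min_le (N:ℝ) (N:ℝ) r (by linarith) le_rfl hnR hr.le
    -- summability of the integrals
    have hsum_int : Summable (fun k => ∫ r, g k r ∂ν) := by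
      refine summable_of_sum_range_le (c := ∫ r, (N:ℝ) ^ 2 * min r (r ^ 2) ∂ν) ?_ ?_
      · intro k
        refine integral_nonneg_of_ae ?_
        filter_upwards [ae_restrict_mem measurableSet_Ioi] with r hr
        exact hgnonneg k r hr
      · intro n
        rw [← integral_finset_sum _ (fun k _ => intg k)]
        refine integral_mono_ae (integrable_finset_sum _ (fun k _ => intg k))
          (hμ.const_mul _) ?_
        filter_upwards [ae_restrict_mem measurableSet_Ioi] with r hr
        calc ∑ k ∈ Finset.range n, g k r
            ≤ ∑' k, g k r := Summable.sum_le_tsum _ (fun k _ => hgnonneg k r hr) (hgsum r)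
        _ = (Real.exp (s * ((N:ℝ) * r)) - 1 - s * ((N:ℝ) * r)) * Real.exp (-(N:ℝ) * r) :=
            htail r
        _ ≤ (N:ℝ) ^ 2 * min r (r ^ 2) := by
            have hneg : -(N:ℝ) * r = -((N:ℝ) * r) := by ring
            rw [hneg]
            exact le_trans (aux_tail_le _ s (mul_nonneg (by linarith) hr.le) hs0 hs1)
              (aux_min_le (N:ℝ) (N:ℝ) r (by linarith) le_rfl hnR hr.le)
    -- interchange sum and integral
    have hinter : ∫ r, (∑' k, g k r) ∂ν = ∑' k, ∫ r, g k r ∂ν := by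
      refine (integral_tsum_of_summable_integral_norm intg ?_).symm
      have e : ∀ k, ∫ r, ‖g k r‖ ∂ν = ∫ r, g k r ∂ν := by
        intro k
        refine integral_congr_ae ?_
        filter_upwards [ae_restrict_mem measurableSet_Ioi] with r hr
        exact Real.norm_of_nonneg (hgnonneg k r hr)
      simpa only [e] using hsum_int
    -- value of each integral
    have hfacne : ∀ k : ℕ, ((Nat.factorial k : ℝ)) ≠ 0 := fun k => by
      exact_mod_cast (Nat.factorial_ne_zero k)
    have hNne : (N:ℝ) ≠ 0 := by linarith
    have hdne : d1N ≠ 0 := ne_of_gt hd1Npos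
    have hval : ∀ k : ℕ, ∫ r, g k r ∂ν
        = if 2 ≤ k then ((N:ℝ) * d1N) * (q k * s ^ k) else 0 := by
      intro k
      by_cases hk : 2 ≤ k
      · simp only [hgdef, if_pos hk]
        have e : (fun r => (s * ((N:ℝ) * r)) ^ k / (Nat.factorial k : ℝ)
              * Real.exp (-(N:ℝ) * r))
            = fun r => (s ^ k / (Nat.factorial k : ℝ))
              * (((N:ℝ) * r) ^ k * Real.exp (-(N:ℝ) * r)) := by
          funext r; rw [mul_pow]; ring
        rw [e, integral_const_mul, hqk k hk]
        field_simp
      · simp only [hgdef, if_neg hk]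
        simp
    -- decomposition of the L integrand
    have hpt : ∀ r : ℝ, Real.exp (-((N:ℝ) * (1 - s)) * r) - 1 + ((N:ℝ) * (1 - s)) * r
        = (Real.exp (-(N:ℝ) * r) - 1 + (N:ℝ) * r)
          - ((N:ℝ) * s) * (r * (1 - Real.exp (-(N:ℝ) * r)))
          + (Real.exp (s * ((N:ℝ) * r)) - 1 - s * ((N:ℝ) * r)) * Real.exp (-(N:ℝ) * r) := by
      intro r
      have he : Real.exp (-((N:ℝ) * (1 - s)) * r)
          = Real.exp (s * ((N:ℝ) * r)) * Real.exp (-(N:ℝ) * r) := by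
        rw [← Real.exp_add]; ring_nf
      rw [he]; ring
    have hLs : L ((N:ℝ) * (1 - s)) = L (N:ℝ) - ((N:ℝ) * s) * d1N
        + ∫ r, (Real.exp (s * ((N:ℝ) * r)) - 1 - s * ((N:ℝ) * r))
            * Real.exp (-(N:ℝ) * r) ∂ν := by
      rw [hL ((N:ℝ) * (1 - s)), hL (N:ℝ), hd1N]
      rw [integral_congr_ae (Filter.Eventually.of_forall hpt)]
      have h1 : Integrable (fun r : ℝ => (Real.exp (-(N:ℝ) * r) - 1 + (N:ℝ) * r)
          - ((N:ℝ) * s) * (r * (1 - Real.exp (-(N:ℝ) * r)))) ν :=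
        (intL (N:ℝ) (by linarith)).sub (intD.const_mul _)
      have h2 : Integrable (fun r : ℝ =>
          ((N:ℝ) * s) * (r * (1 - Real.exp (-(N:ℝ) * r)))) ν := intD.const_mul _
      rw [integral_add h1 intT, integral_sub (intL (N:ℝ) (by linarith)) h2,
        integral_const_mul]
    -- the tail integral in terms of q
    have hT : ∫ r, (Real.exp (s * ((N:ℝ) * r)) - 1 - s * ((N:ℝ) * r))
          * Real.exp (-(N:ℝ) * r) ∂ν
        = ((N:ℝ) * d1N) * ∑' k, (if 2 ≤ k then q k * s ^ k else 0) := by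
      rw [integral_congr_ae (Filter.Eventually.of_forall fun r => (htail r).symm), hinter,
        tsum_congr hval]
      rw [show (fun k : ℕ => if 2 ≤ k then ((N:ℝ) * d1N) * (q k * s ^ k) else 0)
          = fun k : ℕ => ((N:ℝ) * d1N) * (if 2 ≤ k then q k * s ^ k else 0) from by
        funext k; split <;> simp]
      exact tsum_mul_left
    have hfinal : f s = q 0 + ∑' k, (if 2 ≤ k then q k * s ^ k else 0) := by
      rw [hf s, hLs, hT, hq0]
      field_simp
      ring
    -- summability of the coefficient series
    have hsummable2 : Summable (fun k : ℕ => if 2 ≤ k then q k * s ^ k else 0) := by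
      have e : (fun k : ℕ => if 2 ≤ k then q k * s ^ k else 0)
          = fun k => ((N:ℝ) * d1N)⁻¹ * ∫ r, g k r ∂ν := by
        funext k
        rw [hval k]
        split
        · field_simp
        · simp
      rw [e]
      exact hsum_int.mul_left _
    have h0 : HasSum (fun k : ℕ => if k = 0 then q 0 else 0) (q 0) := hasSum_ite_eq 0 (q 0)
    have heq : (fun k : ℕ => q k * s ^ k)
        = fun k => (if k = 0 then q 0 else 0) + (if 2 ≤ k then q k * s ^ k else 0) := by
      funext k
      match k with
      | 0 => simp
      | 1 => simp [hq1]
      | (n + 2) => simp [Nat.le_add_left 2 n]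
    rw [hfinal, heq, Summable.tsum_add h0.summable hsummable2, h0.tsum_eq]
  refine ⟨part1, ?_, ?_⟩
  · -- nonnegativity
    intro k
    match k with
    | 0 =>
      rw [hq0]
      refine div_nonneg ?_ hD.le
      rw [hL (N:ℝ)]
      refine integral_nonneg_of_ae ?_
      filter_upwards [ae_restrict_mem measurableSet_Ioi] with r hr
      simpa [neg_mul] using aux_exp_nonneg ((N:ℝ) * r)
    | 1 => rw [hq1]
    | (n + 2) =>
      rw [hqk (n + 2) (Nat.le_add_left 2 n)]
      refine mul_nonneg (by positivity) ?_
      refine integral_nonneg_of_ae ?_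
      filter_upwards [ae_restrict_mem measurableSet_Ioi] with r hr
      exact mul_nonneg (pow_nonneg (mul_nonneg (by linarith) (le_of_lt hr)) _)
        (Real.exp_pos _).le
  · -- total mass one
    have h1 := part1 1 (by norm_num)
    have hL0 : L ((N:ℝ) * (1 - 1)) = 0 := by
      rw [show (N:ℝ) * (1 - 1) = 0 from by ring, hL 0]
      simp
    have hf1 : f 1 = 1 := by rw [hf 1, hL0]; ring
    rw [hf1] at h1
    simpa using h1.symm
end

section
/- Let μ be a nonzero σ-finite measure on (0,∞) with ∫₀^∞ (r ∧ r²) μ(dr) < ∞, N ≥ 1 an integer with d_{1,N} = ∫₀^∞ r(1 − e^{−Nr}) μ(dr) > 0, and define q_0^{1,N} = L(N)/(N d_{1,N}), q_1^{1,N} = 0, q_k^{1,N} = (1/(k! N d_{1,N})) ∫₀^∞ (Nr)^k e^{−Nr} μ(dr) for k ≥ 2, where L(u) = ∫₀^∞ (e^{−ur} − 1 + ur) μ(dr). Then ∑_{k≥2} (k−1) q_k^{1,N} = q_0^{1,N}; consequently, if q_0^{1,N} < 1, the probability weights p_k^{1,N} = q_{k+1}^{1,N}/(1 − q_0^{1,N})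 (k ≥ 1) define a probability distribution on the positive integers whose mean is m_{1,N} = ∑_{k≥1} k p_k^{1,N} = q_0^{1,N}/(1 − q_0^{1,N}). -/
open MeasureTheory

lemma exp_tsum (x : ℝ) : ∑' n : ℕ, x ^ n / (Nat.factorial n : ℝ) = Real.exp x := by
  rw [Real.exp_eq_exp_ℝ, NormedSpace.exp_eq_tsum_div]

lemma summable0 (x : ℝ) : Summable (fun n : ℕ => x ^ n / (Nat.factorial n : ℝ)) :=
  Real.summable_pow_div_factorial x

lemma summable1 (x : ℝ) : Summable (fun n : ℕ => x ^ (n+1) / (Nat.factorial (n+1) : ℝ)) :=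
  (summable_nat_add_iff 1).2 (summable0 x)

lemma summable2 (x : ℝ) : Summable (fun n : ℕ => x ^ (n+2) / (Nat.factorial (n+2) : ℝ)) :=
  (summable_nat_add_iff 2).2 (summable0 x)

lemma tsum1 (x : ℝ) : ∑' n : ℕ, x ^ (n+1) / (Nat.factorial (n+1) : ℝ) = Real.exp x - 1 := by
  have h := Summable.tsum_eq_zero_add (summable0 x)
  rw [exp_tsum] at h
  simp at h
  linarith

lemma tsum2 (x : ℝ) : ∑' n : ℕ, x ^ (n+2) / (Nat.factorial (n+2) : ℝ) = Real.exp x - 1 - x := by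
  have h := Summable.tsum_eq_zero_add (summable1 x)
  rw [tsum1] at h
  have e : ∀ b : ℕ, b + 1 + 1 = b + 2 := fun _ => rfl
  simp only [e] at h
  norm_num at h
  linarith

lemma summable3 (x : ℝ) : Summable (fun n : ℕ => x ^ (n+2) / (Nat.factorial (n+1) : ℝ)) := by
  have : (fun n : ℕ => x ^ (n+2) / (Nat.factorial (n+1) : ℝ))
      = fun n : ℕ => x * (x ^ (n+1) / (Nat.factorial (n+1) : ℝ)) := by
    funext n; rw [pow_succ]; ring
  rw [this]
  exact (summable1 x).mul_left x

lemma tsum3 (x : ℝ) : ∑' n : ℕ, x ^ (n+2) / (Nat.factorial (n+1) : ℝ) = x * (Real.exp x - 1) := by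
  have : (fun n : ℕ => x ^ (n+2) / (Nat.factorial (n+1) : ℝ))
      = fun n : ℕ => x * (x ^ (n+1) / (Nat.factorial (n+1) : ℝ)) := by
    funext n; rw [pow_succ]; ring
  rw [this, tsum_mul_left, tsum1]

lemma fact_split (n : ℕ) (x : ℝ) :
    ((n:ℝ)+1) * x^(n+2) / (Nat.factorial (n+2) : ℝ)
      = x^(n+2) / (Nat.factorial (n+1) : ℝ) - x^(n+2) / (Nat.factorial (n+2) : ℝ) := by
  have h2 : (Nat.factorial (n+2) : ℝ) = ((n:ℝ)+2) * (Nat.factorial (n+1) : ℝ) := by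
    rw [show n+2 = (n+1)+1 from rfl, Nat.factorial_succ]; push_cast; ring
  have p1 : (Nat.factorial (n+1) : ℝ) ≠ 0 := Nat.cast_ne_zero.2 (Nat.factorial_ne_zero _)
  have p2 : ((n:ℝ)+2) ≠ 0 := by positivity
  rw [h2]; field_simp; ring

lemma keysummable (x : ℝ) :
    Summable (fun n : ℕ => ((n:ℝ)+1) * x^(n+2) / (Nat.factorial (n+2) : ℝ)) := by
  have e : (fun n : ℕ => ((n:ℝ)+1) * x^(n+2) / (Nat.factorial (n+2) : ℝ))
      = fun n => x^(n+2)/(Nat.factorial (n+1):ℝ) - x^(n+2)/(Nat.factorial (n+2):ℝ) := by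
    funext n; exact fact_split n x
  rw [e]; exact (summable3 x).sub (summable2 x)

lemma keytsum (x : ℝ) : ∑' n : ℕ, ((n:ℝ)+1) * x^(n+2) / (Nat.factorial (n+2) : ℝ)
    = x * Real.exp x - Real.exp x + 1 := by
  have e : (fun n : ℕ => ((n:ℝ)+1) * x^(n+2) / (Nat.factorial (n+2) : ℝ))
      = fun n => x^(n+2)/(Nat.factorial (n+1):ℝ) - x^(n+2)/(Nat.factorial (n+2):ℝ) := by
    funext n; exact fact_split n x
  rw [e, Summable.tsum_sub (summable3 x) (summable2 x), tsum3, tsum2]; ring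

lemma g_nonneg {x : ℝ} (hx : 0 ≤ x) : 0 ≤ Real.exp (-x) - 1 + x := by
  nlinarith [Real.add_one_le_exp (-x)]

lemma exp_neg_le_one {x : ℝ} (hx : 0 ≤ x) : Real.exp (-x) ≤ 1 := by
  rw [← Real.exp_zero]; exact Real.exp_le_exp.2 (by linarith)

lemma g_le_x {x : ℝ} (hx : 0 ≤ x) : Real.exp (-x) - 1 + x ≤ x := by
  nlinarith [exp_neg_le_one hx]

lemma g_le_sq {x : ℝ} (hx : 0 ≤ x) : Real.exp (-x) - 1 + x ≤ x^2 := by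
  rcases le_total x 1 with h1 | h1
  · have hb := Real.exp_bound (x := -x) (by rw [abs_neg, abs_of_nonneg hx]; exact h1)
      (n := 2) (by norm_num)
    have hs : ∑ m ∈ Finset.range 2, (-x) ^ m / (Nat.factorial m : ℝ) = 1 - x := by
      simp [Finset.sum_range_succ]
      ring
    rw [hs, abs_neg, abs_of_nonneg hx] at hb
    norm_num at hb
    have h2 := (abs_le.1 hb).2
    nlinarith
  · nlinarith [g_le_x hx]

lemma one_sub_exp_le (x : ℝ) : 1 - Real.exp (-x) ≤ x := by
  nlinarith [Real.add_one_le_exp (-x)]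

open MeasureTheory in
lemma swap_lemma {ν : Measure ℝ} (f : ℕ → ℝ → ℝ) (G : ℝ → ℝ)
    (hfc : ∀ k, Continuous (f k))
    (hfnn : ∀ᵐ r ∂ν, ∀ k, 0 ≤ f k r)
    (hfs : ∀ r, Summable (fun k => f k r))
    (hftsum : ∀ r, ∑' k, f k r = G r)
    (hG : Integrable G ν) :
    ∑' k : ℕ, ∫ r, f k r ∂ν = ∫ r, G r ∂ν := by
  have hGnn : 0 ≤ᵐ[ν] G := by
    filter_upwards [hfnn] with r hr
    rw [← hftsum r]; exact tsum_nonneg hr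
  have hmeas : ∀ k : ℕ, AEStronglyMeasurable (f k) ν := fun k => (hfc k).aestronglyMeasurable
  have hlin : ∑' k : ℕ, ∫⁻ r, ‖f k r‖₊ ∂ν ≠ ⊤ := by
    rw [← lintegral_tsum (fun k => ((hfc k).measurable.nnnorm.coe_nnreal_ennreal).aemeasurable)]
    have heq : ∫⁻ r, ∑' k : ℕ, (‖f k r‖₊ : ENNReal) ∂ν = ∫⁻ r, ENNReal.ofReal (G r) ∂ν := by
      apply lintegral_congr_ae
      filter_upwards [hfnn] with r hr
      rw [← hftsum r, ENNReal.ofReal_tsum_of_nonneg hr (hfs r)]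
      exact tsum_congr fun k => Real.enorm_eq_ofReal (hr k)
    rw [heq, ← ofReal_integral_eq_lintegral_ofReal hG hGnn]
    exact ENNReal.ofReal_ne_top
  rw [← integral_tsum hmeas hlin]
  exact integral_congr_ae (Filter.Eventually.of_forall hftsum)


/-- With the coefficients `q_k^{1,N}` of `f_{1,N}` as in Statement 2, one has
`∑_{k≥2} (k-1) q_k = q_0`; consequently, if `q_0 < 1`, the weights
`p_k = q_{k+1}/(1-q_0)` (`k ≥ 1`) define a probability distribution on the positive
integers with mean `∑_{k≥1} k p_k = q_0/(1-q_0)`. -/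
theorem stmt3 (μ : Measure ℝ) [SigmaFinite μ]
    (hμ : Integrable (fun r => min r (r ^ 2)) (μ.restrict (Set.Ioi 0)))
    (hμne : μ.restrict (Set.Ioi 0) ≠ 0)
    (N : ℕ) (hN : 1 ≤ N)
    (L : ℝ → ℝ)
    (hL : ∀ u : ℝ, L u = ∫ r in Set.Ioi (0:ℝ), (Real.exp (-u * r) - 1 + u * r) ∂μ)
    (d1N : ℝ)
    (hd1N : d1N = ∫ r in Set.Ioi (0:ℝ), r * (1 - Real.exp (-(N:ℝ) * r)) ∂μ)
    (hd1Npos : 0 < d1N)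
    (q : ℕ → ℝ)
    (hq0 : q 0 = L (N:ℝ) / ((N:ℝ) * d1N))
    (hq1 : q 1 = 0)
    (hqk : ∀ k : ℕ, 2 ≤ k → q k =
      (1 / ((Nat.factorial k : ℝ) * N * d1N)) *
        ∫ r in Set.Ioi (0:ℝ), ((N:ℝ) * r) ^ k * Real.exp (-(N:ℝ) * r) ∂μ)
    (p : ℕ → ℝ)
    (hp : ∀ k : ℕ, 1 ≤ k → p k = q (k + 1) / (1 - q 0)) :
    (∑' k : ℕ, ((k : ℝ) + 1) * q (k + 2)) = q 0 ∧
    (q 0 < 1 →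
      (∀ k : ℕ, 1 ≤ k → 0 ≤ p k) ∧
      (∑' k : ℕ, p (k + 1)) = 1 ∧
      (∑' k : ℕ, ((k : ℝ) + 1) * p (k + 1)) = q 0 / (1 - q 0)) := by
  set c : ℝ := (N:ℝ) with hcdef
  have hc1 : (1:ℝ) ≤ c := by rw [hcdef]; exact_mod_cast hN
  have hc0 : (0:ℝ) < c := lt_of_lt_of_le one_pos hc1
  set ν : Measure ℝ := μ.restrict (Set.Ioi 0) with hν
  -- the function g
  set g : ℝ → ℝ := fun r => Real.exp (-(c*r)) - 1 + c*r with hgdef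
  have hLc : L c = ∫ r, g r ∂ν := by
    rw [hL c]; simp only [hgdef, neg_mul, hν]
  have hgnn : ∀ r : ℝ, 0 ≤ r → 0 ≤ g r := fun r hr => g_nonneg (by positivity)
  have hgint : Integrable g ν := by
    have hgcont : Continuous g := by rw [hgdef]; fun_prop
    apply Integrable.mono' (hμ.const_mul (c^2)) hgcont.aestronglyMeasurable
    filter_upwards [ae_restrict_mem measurableSet_Ioi] with r hr
    have hr0 : (0:ℝ) < r := hr
    rw [Real.norm_eq_abs, abs_of_nonneg (hgnn r hr0.le)]
    simp only [hgdef]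
    rcases le_total r (r^2) with h | h
    · rw [min_eq_left h]
      have hb := g_le_x (x := c*r) (by positivity)
      nlinarith [mul_nonneg (mul_nonneg (sub_nonneg.2 hc1) hc0.le) hr0.le]
    · rw [min_eq_right h]
      have hb := g_le_sq (x := c*r) (by positivity)
      nlinarith
  -- the function D
  set D : ℝ → ℝ := fun r => r * (1 - Real.exp (-(c*r))) with hDdef
  have hd_eq : d1N = ∫ r, D r ∂ν := by
    rw [hd1N]; simp only [hDdef, neg_mul, hν]
  have hdint : Integrable D ν := by
    have hDcont : Continuous D := by rw [hDdef]; fun_prop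
    apply Integrable.mono' (hμ.const_mul c) hDcont.aestronglyMeasurable
    filter_upwards [ae_restrict_mem measurableSet_Ioi] with r hr
    have hr0 : (0:ℝ) < r := hr
    simp only [hDdef]
    have he1 : Real.exp (-(c*r)) ≤ 1 := exp_neg_le_one (by positivity)
    have he2 : 0 ≤ Real.exp (-(c*r)) := (Real.exp_pos _).le
    have he3 : 1 - Real.exp (-(c*r)) ≤ c*r := one_sub_exp_le (c*r)
    rw [Real.norm_eq_abs, abs_of_nonneg (mul_nonneg hr0.le (by linarith))]
    rcases le_total r (r^2) with h | h
    · rw [min_eq_left h]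
      nlinarith [mul_nonneg (sub_nonneg.2 hc1) hr0.le, mul_nonneg hr0.le he2]
    · rw [min_eq_right h]
      nlinarith [mul_le_mul_of_nonneg_left he3 hr0.le]
  -- the function G = c*D - g
  set G : ℝ → ℝ := fun r => c * D r - g r with hGdef
  have hGint : Integrable G ν := (hdint.const_mul c).sub hgint
  have hGval : ∫ r, G r ∂ν = c * d1N - L c := by
    rw [hGdef]
    rw [integral_sub (hdint.const_mul c) hgint, integral_const_mul _ _, ← hd_eq, ← hLc]
  have hcd : c * d1N ≠ 0 := by positivity
  -- swap 1
  have hswap1 : ∑' k : ℕ, ∫ r, Real.exp (-(c*r)) *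
        (((k:ℝ)+1) * (c*r)^(k+2) / (Nat.factorial (k+2) : ℝ)) ∂ν = ∫ r, g r ∂ν := by
    apply swap_lemma
    · intro k; fun_prop
    · filter_upwards [ae_restrict_mem measurableSet_Ioi] with r hr k
      have hr0 : (0:ℝ) < r := hr
      have hx : (0:ℝ) ≤ c*r := by positivity
      have hf : (0:ℝ) < (Nat.factorial (k+2) : ℝ) := by exact_mod_cast (k+2).factorial_pos
      exact mul_nonneg (Real.exp_pos _).le
        (div_nonneg (mul_nonneg (by positivity) (pow_nonneg hx _)) hf.le)
    · intro r; exact (keysummable (c*r)).mul_left _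
    · intro r
      rw [tsum_mul_left, keytsum (c*r)]
      have hE : Real.exp (-(c*r)) * Real.exp (c*r) = 1 := by
        rw [← Real.exp_add]; simp
      simp only [hgdef]
      linear_combination (c*r - 1) * hE
    · exact hgint
  -- swap 2
  have hswap2 : ∑' k : ℕ, ∫ r, Real.exp (-(c*r)) *
        ((c*r)^(k+2) / (Nat.factorial (k+2) : ℝ)) ∂ν = ∫ r, G r ∂ν := by
    apply swap_lemma
    · intro k; fun_prop
    · filter_upwards [ae_restrict_mem measurableSet_Ioi] with r hr k
      have hr0 : (0:ℝ) < r := hr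
      have hx : (0:ℝ) ≤ c*r := by positivity
      have hf : (0:ℝ) < (Nat.factorial (k+2) : ℝ) := by exact_mod_cast (k+2).factorial_pos
      exact mul_nonneg (Real.exp_pos _).le (div_nonneg (pow_nonneg hx _) hf.le)
    · intro r; exact (summable2 (c*r)).mul_left _
    · intro r
      rw [tsum_mul_left, tsum2 (c*r)]
      have hE : Real.exp (-(c*r)) * Real.exp (c*r) = 1 := by
        rw [← Real.exp_add]; simp
      simp only [hGdef, hDdef, hgdef]
      linear_combination hE
    · exact hGint
  -- q values
  have hqval : ∀ k : ℕ, ((k:ℝ)+1) * q (k+2)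
      = (1/(c*d1N)) * ∫ r, Real.exp (-(c*r)) *
          (((k:ℝ)+1) * (c*r)^(k+2) / (Nat.factorial (k+2) : ℝ)) ∂ν := by
    intro k
    have hf : (Nat.factorial (k+2) : ℝ) ≠ 0 := Nat.cast_ne_zero.2 (Nat.factorial_ne_zero _)
    have e1 : ∫ r, Real.exp (-(c*r)) *
          (((k:ℝ)+1) * (c*r)^(k+2) / (Nat.factorial (k+2) : ℝ)) ∂ν
        = (((k:ℝ)+1) / (Nat.factorial (k+2) : ℝ)) *
            ∫ r, (c*r)^(k+2) * Real.exp (-c*r) ∂ν := by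
      rw [← integral_const_mul _ _]
      apply integral_congr_ae (Filter.Eventually.of_forall fun r => ?_)
      rw [neg_mul]; ring
    rw [e1, hqk (k+2) (by omega)]
    ring
  have hq2val : ∀ k : ℕ, q (k+2)
      = (1/(c*d1N)) * ∫ r, Real.exp (-(c*r)) *
          ((c*r)^(k+2) / (Nat.factorial (k+2) : ℝ)) ∂ν := by
    intro k
    have hf : (Nat.factorial (k+2) : ℝ) ≠ 0 := Nat.cast_ne_zero.2 (Nat.factorial_ne_zero _)
    have e1 : ∫ r, Real.exp (-(c*r)) *
          ((c*r)^(k+2) / (Nat.factorial (k+2) : ℝ)) ∂ν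
        = ((1:ℝ) / (Nat.factorial (k+2) : ℝ)) *
            ∫ r, (c*r)^(k+2) * Real.exp (-c*r) ∂ν := by
      rw [← integral_const_mul _ _]
      apply integral_congr_ae (Filter.Eventually.of_forall fun r => ?_)
      rw [neg_mul]; ring
    rw [e1, hqk (k+2) (by omega)]
    ring
  -- part 1
  have part1 : (∑' k : ℕ, ((k:ℝ)+1) * q (k+2)) = q 0 := by
    calc (∑' k : ℕ, ((k:ℝ)+1) * q (k+2))
        = ∑' k : ℕ, (1/(c*d1N)) * ∫ r, Real.exp (-(c*r)) *
            (((k:ℝ)+1) * (c*r)^(k+2) / (Nat.factorial (k+2) : ℝ)) ∂ν := tsum_congr hqval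
      _ = (1/(c*d1N)) * ∑' k : ℕ, ∫ r, Real.exp (-(c*r)) *
            (((k:ℝ)+1) * (c*r)^(k+2) / (Nat.factorial (k+2) : ℝ)) ∂ν := tsum_mul_left
      _ = (1/(c*d1N)) * L c := by rw [hswap1, ← hLc]
      _ = q 0 := by rw [hq0]; ring
  have part2 : (∑' k : ℕ, q (k+2)) = 1 - q 0 := by
    calc (∑' k : ℕ, q (k+2))
        = ∑' k : ℕ, (1/(c*d1N)) * ∫ r, Real.exp (-(c*r)) *
            ((c*r)^(k+2) / (Nat.factorial (k+2) : ℝ)) ∂ν := tsum_congr hq2val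
      _ = (1/(c*d1N)) * ∑' k : ℕ, ∫ r, Real.exp (-(c*r)) *
            ((c*r)^(k+2) / (Nat.factorial (k+2) : ℝ)) ∂ν := tsum_mul_left
      _ = (1/(c*d1N)) * (c * d1N - L c) := by rw [hswap2, hGval]
      _ = 1 - q 0 := by rw [hq0]; field_simp
  have hqnn : ∀ k : ℕ, 0 ≤ q (k+2) := by
    intro k
    rw [hqk (k+2) (by omega)]
    have hf : (0:ℝ) < (Nat.factorial (k+2) : ℝ) := by exact_mod_cast (k+2).factorial_pos
    apply mul_nonneg (by positivity)
    apply setIntegral_nonneg measurableSet_Ioi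
    intro r hr
    have hr0 : (0:ℝ) < r := hr
    have hx : (0:ℝ) ≤ c*r := by positivity
    exact mul_nonneg (pow_nonneg hx _) (Real.exp_pos _).le
  refine ⟨part1, fun hqlt => ?_⟩
  have h1q : (0:ℝ) < 1 - q 0 := by linarith
  refine ⟨?_, ?_, ?_⟩
  · intro k hk
    rw [hp k hk]
    apply div_nonneg _ h1q.le
    obtain ⟨j, rfl⟩ : ∃ j, k = j + 1 := ⟨k-1, by omega⟩
    exact hqnn j
  · calc (∑' k : ℕ, p (k+1))
        = ∑' k : ℕ, q (k+2) / (1 - q 0) := tsum_congr fun k => hp (k+1) (by omega)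
      _ = (∑' k : ℕ, q (k+2)) / (1 - q 0) := tsum_div_const
      _ = 1 := by rw [part2, div_self (ne_of_gt h1q)]
  · calc (∑' k : ℕ, ((k:ℝ)+1) * p (k+1))
        = ∑' k : ℕ, ((k:ℝ)+1) * q (k+2) / (1 - q 0) := by
          refine tsum_congr fun k => ?_
          rw [hp (k+1) (by omega), mul_div_assoc]
      _ = (∑' k : ℕ, ((k:ℝ)+1) * q (k+2)) / (1 - q 0) := tsum_div_const
      _ = q 0 / (1 - q 0) := by rw [part1]
end

section
/- Let μ be a σ-finite measure on (0,∞) with ∫₀^∞ (r ∧ r²) μ(dr) < ∞, let α, β, c ≥ 0 and set b = β − α. For each integer N ≥ 1 with d_{1,N} > 0, define ψ^N(u) = N d_N (h_N(1 − u/N) − (1 − u/N)) for 0 ≤ u ≤ N, where h_N, f_{1,N}, f_{2,N}, d_N are as in the context. Then for every u ≥ 0 and every N ≥ u one has ψ^N(u) = ψ(u) + (α/N) u², where ψ(u) = bu + cu² + ∫₀^∞ (e^{−ur} − 1 + ur) μ(dr); in particular, for every u ≥ 0, ψ^N(u) → ψ(u) as N → ∞. -/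
open MeasureTheory

/-- With the approximating branching mechanism
`ψ^N(u) = N d_N (h_N(1-u/N) - (1-u/N))` built from `f_{1,N}` and `f_{2,N}` as in the
paper, one has `ψ^N(u) = ψ(u) + (α/N) u²` for `0 ≤ u ≤ N`, where
`ψ(u) = bu + cu² + ∫ (e^{-ur} - 1 + ur) μ(dr)`, `b = β - α`; in particular
`ψ^N(u) → ψ(u)` as `N → ∞` for every `u ≥ 0`. -/
theorem stmt4 (μ : Measure ℝ) [SigmaFinite μ]
    (hμ : Integrable (fun r => min r (r ^ 2)) (μ.restrict (Set.Ioi 0)))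
    (α β c : ℝ) (hα : 0 ≤ α) (hβ : 0 ≤ β) (hc : 0 ≤ c)
    (b : ℝ) (hb : b = β - α)
    (L : ℝ → ℝ)
    (hL : ∀ u : ℝ, L u = ∫ r in Set.Ioi (0:ℝ), (Real.exp (-u * r) - 1 + u * r) ∂μ)
    (d1N : ℕ → ℝ)
    (hd1N : ∀ N : ℕ, d1N N = ∫ r in Set.Ioi (0:ℝ), r * (1 - Real.exp (-(N:ℝ) * r)) ∂μ)
    (hd1Npos : ∀ N : ℕ, 1 ≤ N → 0 < d1N N)
    (f1N : ℕ → ℝ → ℝ)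
    (hf1N : ∀ (N : ℕ) (s : ℝ), f1N N s = s + ((N:ℝ) * d1N N)⁻¹ * L ((N:ℝ) * (1 - s)))
    (μN lamN d2N dN : ℕ → ℝ)
    (hμN : ∀ N : ℕ, μN N = c * N + β)
    (hlamN : ∀ N : ℕ, lamN N = c * N + α)
    (hd2N : ∀ N : ℕ, d2N N = μN N + lamN N)
    (f2N : ℕ → ℝ → ℝ)
    (hf2N : ∀ (N : ℕ) (s : ℝ), f2N N s = (μN N + lamN N * s ^ 2) / d2N N)
    (hdN : ∀ N : ℕ, dN N = d1N N + d2N N)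
    (hN_ : ℕ → ℝ → ℝ)
    (hhN : ∀ (N : ℕ) (s : ℝ), hN_ N s = (d1N N * f1N N s + d2N N * f2N N s) / dN N)
    (ψN : ℕ → ℝ → ℝ)
    (hψN : ∀ (N : ℕ) (u : ℝ),
      ψN N u = (N:ℝ) * dN N * (hN_ N (1 - u / N) - (1 - u / N)))
    (ψ : ℝ → ℝ)
    (hψ : ∀ u : ℝ, ψ u =
      b * u + c * u ^ 2 + ∫ r in Set.Ioi (0:ℝ), (Real.exp (-u * r) - 1 + u * r) ∂μ) :
    ∀ u : ℝ, 0 ≤ u →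
      (∀ N : ℕ, 1 ≤ N → u ≤ N → ψN N u = ψ u + (α / N) * u ^ 2) ∧
      Filter.Tendsto (fun N : ℕ => ψN N u) Filter.atTop (nhds (ψ u)) := by
  intro u hu
  have key : ∀ N : ℕ, 1 ≤ N → ψN N u = ψ u + (α / N) * u ^ 2 := by
    intro N hN1
    have hNpos : (0:ℝ) < N := by exact_mod_cast hN1
    have hNne : (N:ℝ) ≠ 0 := hNpos.ne'
    have hd1 : 0 < d1N N := hd1Npos N hN1
    have hcN : 0 ≤ c * N := mul_nonneg hc hNpos.le
    have hkey2 : d2N N * f2N N (1 - u / N) = μN N + lamN N * (1 - u / N) ^ 2 := by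
      by_cases hd2 : d2N N = 0
      · have h1 : μN N = 0 := by
          have := hd2N N; rw [hμN, hlamN] at this
          rw [hμN]; rw [hd2] at this; linarith
        have h2 : lamN N = 0 := by
          have := hd2N N; rw [hμN, hlamN] at this
          rw [hlamN]; rw [hd2] at this; linarith
        simp [hd2, h1, h2]
      · rw [hf2N]; field_simp
    have hdNpos : 0 < dN N := by
      rw [hdN, hd2N, hμN, hlamN]; nlinarith
    have hNu : (N:ℝ) * (1 - (1 - u / N)) = u := by field_simp; ring
    have harg : L ((N:ℝ) * (1 - (1 - u / N))) = L u := by rw [hNu]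
    rw [hψN, hhN, hf1N, harg, hψ, ← hL, hb]
    rw [mul_add (d1N N), hkey2, hdN, hd2N, hμN, hlamN]
    have hden : d1N N + (c * (N:ℝ) + β + (c * (N:ℝ) + α)) ≠ 0 := by nlinarith
    field_simp
    ring
  refine ⟨fun N hN1 _ => key N hN1, ?_⟩
  have h0 : Filter.Tendsto (fun N : ℕ => ψ u + (α / N) * u ^ 2) Filter.atTop (nhds (ψ u)) := by
    have : Filter.Tendsto (fun N : ℕ => (α / N) * u ^ 2) Filter.atTop (nhds 0) := by
      have h1 : Filter.Tendsto (fun N : ℕ => ((N:ℝ))⁻¹) Filter.atTop (nhds 0) :=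
        tendsto_inv_atTop_zero.comp tendsto_natCast_atTop_atTop
      have := (h1.const_mul α).mul_const (u ^ 2)
      simpa [div_eq_mul_inv] using this
    simpa using (tendsto_const_nhds.add this)
  refine h0.congr' ?_
  filter_upwards [Filter.eventually_ge_atTop 1] with N hN1
  exact (key N hN1).symm
end

section
/- Let μ be a σ-finite measure on (0,∞) with ∫₀^∞ (r ∧ r²) μ(dr) < ∞, b ∈ ℝ, c ≥ 0, α ≥ 0, and define ψ(u) = bu + cu² + ∫₀^∞ (e^{−ur} − 1 + ur) μ(dr). Fix λ ≥ 0 and T > 0. Suppose u : [0,T] → [0,λ] is continuous and satisfies u(t) = λ − ∫₀^t ψ(u(r)) dr for all t ∈ [0,T], and for each integer N ≥ 1 suppose u^N : [0,T] → [0,λ] is continuous and satisfies u^N(t) = N(1 − e^{−λ/N}) − ∫₀^t [ψ(u^N(r)) + (α/N)(u^N(r))²] dr for all t ∈ [0,T]. Then sup_{0≤t≤T} |u(t) − u^N(t)| → 0 as N → ∞. -/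
open MeasureTheory

section Aux
open Real Set

-- pointwise Lipschitz bound for the integrand
lemma expIntegrand_lip {lam : ℝ} (hlam : 0 ≤ lam) {r : ℝ} (hr : 0 < r) {v w : ℝ}
    (hv : v ∈ Icc 0 lam) (hw : w ∈ Icc 0 lam) :
    |(Real.exp (-v * r) - 1 + v * r) - (Real.exp (-w * r) - 1 + w * r)| ≤
      (max 1 lam * min r (r ^ 2)) * |v - w| := by
  have hderiv : ∀ s ∈ Icc (0:ℝ) lam,
      HasDerivWithinAt (fun v : ℝ => Real.exp (-v * r) - 1 + v * r)
        (-r * Real.exp (-s * r) + r) (Icc 0 lam) s := by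
    intro s hs
    have h1 : HasDerivAt (fun v : ℝ => -v * r) (-r) s := by
      simpa using ((hasDerivAt_id s).neg.mul_const r)
    have h2 : HasDerivAt (fun v : ℝ => Real.exp (-v * r)) (Real.exp (-s * r) * (-r)) s :=
      h1.exp
    have h3 : HasDerivAt (fun v : ℝ => Real.exp (-v * r) - 1 + v * r)
        (Real.exp (-s * r) * (-r) - 0 + r) s :=
      ((h2.sub_const 1).add ((hasDerivAt_id s).mul_const r)).congr_deriv (by ring)
    exact (h3.congr_deriv (by ring)).hasDerivWithinAt
  have hbound : ∀ s ∈ Icc (0:ℝ) lam,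
      ‖-r * Real.exp (-s * r) + r‖ ≤ max 1 lam * min r (r ^ 2) := by
    intro s hs
    have hsr : 0 ≤ s * r := mul_nonneg hs.1 hr.le
    have he1 : Real.exp (-s * r) ≤ 1 := by
      rw [Real.exp_le_one_iff]; nlinarith
    have he2 : 1 - s * r ≤ Real.exp (-s * r) := by
      have := Real.add_one_le_exp (-(s * r)); rw [neg_mul]; linarith
    have he0 : 0 < Real.exp (-s * r) := Real.exp_pos _
    have hval : -r * Real.exp (-s * r) + r = r * (1 - Real.exp (-s * r)) := by ring
    rw [hval, Real.norm_eq_abs, abs_of_nonneg (by nlinarith)]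
    rcases le_total r 1 with h1r | h1r
    · have : min r (r ^ 2) = r ^ 2 := min_eq_right (by nlinarith)
      rw [this]
      have : r * (1 - Real.exp (-s * r)) ≤ r * (s * r) := by nlinarith
      calc r * (1 - Real.exp (-s * r)) ≤ r * (s * r) := this
        _ ≤ lam * r ^ 2 := by nlinarith [hs.2]
        _ ≤ max 1 lam * r ^ 2 := by nlinarith [le_max_right 1 lam, sq_nonneg r]
    · have : min r (r ^ 2) = r := min_eq_left (by nlinarith)
      rw [this]
      calc r * (1 - Real.exp (-s * r)) ≤ r * 1 := by nlinarith
        _ ≤ max 1 lam * r := by nlinarith [le_max_left 1 lam]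
  have := Convex.norm_image_sub_le_of_norm_hasDerivWithin_le hderiv hbound (convex_Icc 0 lam) hw hv
  simpa [Real.norm_eq_abs] using this

-- quadratic bound e^{-x} - 1 + x ≤ x^2 for x ≥ 0
lemma exp_quad_bound {x : ℝ} (hx : 0 ≤ x) :
    0 ≤ Real.exp (-x) - 1 + x ∧ Real.exp (-x) - 1 + x ≤ x ^ 2 := by
  constructor
  · have := Real.add_one_le_exp (-x); linarith
  · have hderiv : ∀ s ∈ Icc (0:ℝ) x,
        HasDerivWithinAt (fun y : ℝ => Real.exp (-y) - 1 + y) (-Real.exp (-s) + 1) (Icc 0 x) s := by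
      intro s hs
      have h2 : HasDerivAt (fun y : ℝ => Real.exp (-y)) (Real.exp (-s) * (-1)) s :=
        (Real.hasDerivAt_exp (-s)).comp s (hasDerivAt_neg s)
      have h3 := ((h2.sub_const 1).add (hasDerivAt_id s)).congr_deriv
        (show Real.exp (-s) * (-1) + 1 = -Real.exp (-s) + 1 by ring)
      exact h3.hasDerivWithinAt
    have hbound : ∀ s ∈ Icc (0:ℝ) x, ‖-Real.exp (-s) + 1‖ ≤ x := by
      intro s hs
      have he1 : Real.exp (-s) ≤ 1 := by rw [Real.exp_le_one_iff]; linarith [hs.1]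
      have he2 : 1 - s ≤ Real.exp (-s) := by linarith [Real.add_one_le_exp (-s)]
      rw [Real.norm_eq_abs, abs_of_nonneg (by linarith)]
      linarith [hs.2]
    have := Convex.norm_image_sub_le_of_norm_hasDerivWithin_le hderiv hbound (convex_Icc 0 x)
      (left_mem_Icc.2 hx) (right_mem_Icc.2 hx)
    simp only [Real.norm_eq_abs, neg_zero, Real.exp_zero, sub_zero] at this
    rw [abs_of_nonneg hx] at this
    have := (abs_le.mp this).2
    nlinarith [this]

lemma expIntegrand_integrable (μ : Measure ℝ)
    (hμ : Integrable (fun r => min r (r ^ 2)) (μ.restrict (Set.Ioi 0)))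
    {lam : ℝ} (hlam : 0 ≤ lam) {v : ℝ} (hv : v ∈ Icc 0 lam) :
    Integrable (fun r => Real.exp (-v * r) - 1 + v * r) (μ.restrict (Set.Ioi 0)) := by
  have hmeas : AEStronglyMeasurable (fun r => Real.exp (-v * r) - 1 + v * r)
      (μ.restrict (Set.Ioi 0)) := by
    apply Continuous.aestronglyMeasurable; continuity
  refine (hμ.const_mul (max 1 lam * lam)).mono' hmeas ?_
  rw [ae_restrict_iff' measurableSet_Ioi]
  filter_upwards with r hr
  have h0 : (0:ℝ) ∈ Icc (0:ℝ) lam := left_mem_Icc.2 hlam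
  have := expIntegrand_lip hlam hr hv h0
  simp only [neg_zero, zero_mul, Real.exp_zero] at this
  rw [Real.norm_eq_abs]
  have habs : |v - 0| ≤ lam := by rw [sub_zero, abs_of_nonneg hv.1]; exact hv.2
  have hmin : 0 ≤ min r (r ^ 2) := le_min hr.le (sq_nonneg r)
  have hM : (0:ℝ) ≤ max 1 lam := le_trans zero_le_one (le_max_left _ _)
  calc |Real.exp (-v * r) - 1 + v * r| = |(Real.exp (-v * r) - 1 + v * r) - (1 - 1 + 0)| := by
        norm_num
    _ ≤ (max 1 lam * min r (r ^ 2)) * |v - 0| := this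
    _ ≤ (max 1 lam * min r (r ^ 2)) * lam := by
        apply mul_le_mul_of_nonneg_left habs (by positivity)
    _ = max 1 lam * lam * min r (r ^ 2) := by ring

lemma psi_lip (μ : Measure ℝ)
    (hμ : Integrable (fun r => min r (r ^ 2)) (μ.restrict (Set.Ioi 0)))
    (b c : ℝ) (hc : 0 ≤ c) (ψ : ℝ → ℝ)
    (hψ : ∀ v : ℝ, ψ v =
      b * v + c * v ^ 2 + ∫ r in Set.Ioi (0:ℝ), (Real.exp (-v * r) - 1 + v * r) ∂μ)
    {lam : ℝ} (hlam : 0 ≤ lam) {v w : ℝ} (hv : v ∈ Icc 0 lam) (hw : w ∈ Icc 0 lam) :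
    |ψ v - ψ w| ≤ (|b| + 2 * c * lam +
      max 1 lam * ∫ r in Set.Ioi (0:ℝ), min r (r ^ 2) ∂μ) * |v - w| := by
  have hIv := expIntegrand_integrable μ hμ hlam hv
  have hIw := expIntegrand_integrable μ hμ hlam hw
  set Jv := ∫ r in Set.Ioi (0:ℝ), (Real.exp (-v * r) - 1 + v * r) ∂μ with hJv
  set Jw := ∫ r in Set.Ioi (0:ℝ), (Real.exp (-w * r) - 1 + w * r) ∂μ with hJw
  have hsub : Jv - Jw = ∫ r in Set.Ioi (0:ℝ),
      ((Real.exp (-v * r) - 1 + v * r) - (Real.exp (-w * r) - 1 + w * r)) ∂μ :=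
    (integral_sub hIv hIw).symm
  have hint_bound : |Jv - Jw| ≤
      (max 1 lam * ∫ r in Set.Ioi (0:ℝ), min r (r ^ 2) ∂μ) * |v - w| := by
    rw [hsub]
    calc |∫ r in Set.Ioi (0:ℝ),
          ((Real.exp (-v * r) - 1 + v * r) - (Real.exp (-w * r) - 1 + w * r)) ∂μ|
        ≤ ∫ r in Set.Ioi (0:ℝ),
          |(Real.exp (-v * r) - 1 + v * r) - (Real.exp (-w * r) - 1 + w * r)| ∂μ := by
          simpa [Real.norm_eq_abs] using norm_integral_le_integral_norm
            (μ := μ.restrict (Set.Ioi 0))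
            (fun r => (Real.exp (-v * r) - 1 + v * r) - (Real.exp (-w * r) - 1 + w * r))
      _ ≤ ∫ r in Set.Ioi (0:ℝ), (max 1 lam * min r (r ^ 2)) * |v - w| ∂μ := by
          apply integral_mono_ae (hIv.sub hIw).abs
            ((hμ.const_mul (max 1 lam)).mul_const |v - w|)
          filter_upwards [ae_restrict_mem measurableSet_Ioi] with r hr
          exact expIntegrand_lip hlam hr hv hw
      _ = (max 1 lam * ∫ r in Set.Ioi (0:ℝ), min r (r ^ 2) ∂μ) * |v - w| := by
          rw [integral_mul_const, integral_const_mul]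
  have hvw : |v + w| ≤ 2 * lam := by
    rw [abs_of_nonneg (by linarith [hv.1, hw.1])]; linarith [hv.2, hw.2]
  have h1 : |b * (v - w)| ≤ |b| * |v - w| := by rw [abs_mul]
  have h2 : |c * ((v + w) * (v - w))| ≤ (2 * c * lam) * |v - w| := by
    rw [abs_mul, abs_mul, abs_of_nonneg hc]
    calc c * (|v + w| * |v - w|) ≤ c * (2 * lam * |v - w|) := by
          exact mul_le_mul_of_nonneg_left
            (mul_le_mul_of_nonneg_right hvw (abs_nonneg _)) hc
      _ = 2 * c * lam * |v - w| := by ring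
  calc |ψ v - ψ w|
      = |b * (v - w) + c * ((v + w) * (v - w)) + (Jv - Jw)| := by
        rw [hψ v, hψ w, ← hJv, ← hJw]; congr 1; ring
    _ ≤ |b * (v - w) + c * ((v + w) * (v - w))| + |Jv - Jw| := abs_add_le _ _
    _ ≤ (|b * (v - w)| + |c * ((v + w) * (v - w))|) + |Jv - Jw| := by
        exact add_le_add_left (abs_add_le _ _) _
    _ ≤ (|b| * |v - w| + (2 * c * lam) * |v - w|) +
        (max 1 lam * ∫ r in Set.Ioi (0:ℝ), min r (r ^ 2) ∂μ) * |v - w| := by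
        exact add_le_add (add_le_add h1 h2) hint_bound
    _ = (|b| + 2 * c * lam +
        max 1 lam * ∫ r in Set.Ioi (0:ℝ), min r (r ^ 2) ∂μ) * |v - w| := by ring

end Aux

open Real Set in
set_option maxHeartbeats 1000000 in
/-- Gronwall-type convergence `sup_{0≤t≤T} |u(t) - u^N(t)| → 0` for the
solutions of `u(t) = λ - ∫₀^t ψ(u(r)) dr` and
`u^N(t) = N(1 - e^{-λ/N}) - ∫₀^t [ψ(u^N(r)) + (α/N)(u^N(r))²] dr`, where
`ψ(u) = bu + cu² + ∫ (e^{-ur} - 1 + ur) μ(dr)`. -/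
theorem stmt5 (μ : Measure ℝ) [SigmaFinite μ]
    (hμ : Integrable (fun r => min r (r ^ 2)) (μ.restrict (Set.Ioi 0)))
    (b c α : ℝ) (hc : 0 ≤ c) (hα : 0 ≤ α)
    (ψ : ℝ → ℝ)
    (hψ : ∀ v : ℝ, ψ v =
      b * v + c * v ^ 2 + ∫ r in Set.Ioi (0:ℝ), (Real.exp (-v * r) - 1 + v * r) ∂μ)
    (lam T : ℝ) (hlam : 0 ≤ lam) (hT : 0 < T)
    (u : ℝ → ℝ)
    (hu_cont : ContinuousOn u (Set.Icc 0 T))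
    (hu_mem : ∀ t ∈ Set.Icc (0:ℝ) T, u t ∈ Set.Icc 0 lam)
    (hu_eq : ∀ t ∈ Set.Icc (0:ℝ) T, u t = lam - ∫ r in (0:ℝ)..t, ψ (u r))
    (uN : ℕ → ℝ → ℝ)
    (huN_cont : ∀ N : ℕ, 1 ≤ N → ContinuousOn (uN N) (Set.Icc 0 T))
    (huN_mem : ∀ N : ℕ, 1 ≤ N → ∀ t ∈ Set.Icc (0:ℝ) T, uN N t ∈ Set.Icc 0 lam)
    (huN_eq : ∀ N : ℕ, 1 ≤ N → ∀ t ∈ Set.Icc (0:ℝ) T,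
      uN N t = N * (1 - Real.exp (-lam / N)) -
        ∫ r in (0:ℝ)..t, (ψ (uN N r) + (α / N) * (uN N r) ^ 2)) :
    ∀ ε : ℝ, 0 < ε → ∃ N₀ : ℕ, ∀ N : ℕ, N₀ ≤ N → ∀ t ∈ Set.Icc (0:ℝ) T,
      |u t - uN N t| ≤ ε := by
  intro ε hε
  set I := ∫ r in Set.Ioi (0:ℝ), min r (r ^ 2) ∂μ with hI
  have hI0 : 0 ≤ I :=
    setIntegral_nonneg measurableSet_Ioi (fun r hr => le_min (le_of_lt hr) (sq_nonneg r))
  set L := |b| + 2 * c * lam + max 1 lam * I with hLdef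
  have hL0 : 0 ≤ L := by
    have := abs_nonneg b
    have h1 : (0:ℝ) ≤ max 1 lam := le_trans zero_le_one (le_max_left _ _)
    have : 0 ≤ max 1 lam * I := mul_nonneg h1 hI0
    nlinarith [mul_nonneg hc hlam]
  set K := L + 1 with hKdef
  have hK0 : (0:ℝ) < K := by dsimp [K]; linarith
  -- ψ Lipschitz, hence continuous, on [0, lam]
  have hψlip : ∀ v ∈ Icc (0:ℝ) lam, ∀ w ∈ Icc (0:ℝ) lam, |ψ v - ψ w| ≤ L * |v - w| :=
    fun v hv w hw => psi_lip μ hμ b c hc ψ hψ hlam hv hw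
  have hψcont : ContinuousOn ψ (Icc 0 lam) := by
    have : LipschitzOnWith (Real.toNNReal L) ψ (Icc 0 lam) := by
      rw [lipschitzOnWith_iff_dist_le_mul]
      intro x hx y hy
      rw [Real.dist_eq, Real.dist_eq, Real.coe_toNNReal _ hL0]
      exact hψlip x hx y hy
    exact this.continuousOn
  -- clamp function
  set pr : ℝ → ℝ := fun t => max 0 (min t T) with hprdef
  have hprcont : Continuous pr := continuous_const.max (continuous_id.min continuous_const)
  have hprmem : ∀ t, pr t ∈ Icc (0:ℝ) T :=
    fun t => ⟨le_max_left _ _, max_le hT.le (min_le_right _ _)⟩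
  have hprid : ∀ t ∈ Icc (0:ℝ) T, pr t = t := by
    intro t ht
    simp only [hprdef]
    rw [min_eq_left ht.2, max_eq_right ht.1]
  -- continuous extension of u and its composed integrand
  have hutc : Continuous (fun t => u (pr t)) := hu_cont.comp_continuous hprcont hprmem
  set g : ℝ → ℝ := fun t => ψ (u (pr t)) with hgdef
  have hgc : Continuous g := hψcont.comp_continuous hutc (fun t => hu_mem _ (hprmem t))
  have hu_eq' : ∀ y ∈ Icc (0:ℝ) T, u y = lam - ∫ r in (0:ℝ)..y, g r := by
    intro y hy
    rw [hu_eq y hy]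
    congr 1
    apply intervalIntegral.integral_congr
    intro r hr
    rw [Set.uIcc_of_le hy.1] at hr
    have hrT : r ∈ Icc (0:ℝ) T := ⟨hr.1, hr.2.trans hy.2⟩
    simp only [hgdef, hprid r hrT]
  -- setup for N
  set C0 := (lam ^ 2 + α * lam ^ 2 / K) * Real.exp (K * T) with hC0def
  obtain ⟨N₁, hN₁⟩ := exists_nat_ge (C0 / ε)
  refine ⟨max N₁ 1, fun N hN t ht => ?_⟩
  have hN1 : 1 ≤ N := le_trans (le_max_right _ _) hN
  have hNn : (1:ℝ) ≤ (N:ℝ) := by exact_mod_cast hN1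
  have hNpos : (0:ℝ) < N := by linarith
  set cN := (N:ℝ) * (1 - Real.exp (-lam / N)) with hcNdef
  have huNtc : Continuous (fun s => uN N (pr s)) :=
    (huN_cont N hN1).comp_continuous hprcont hprmem
  set gN : ℝ → ℝ := fun s => ψ (uN N (pr s)) + (α / N) * (uN N (pr s)) ^ 2 with hgNdef
  have hgNc : Continuous gN := by
    apply Continuous.add
    · exact hψcont.comp_continuous huNtc (fun s => huN_mem N hN1 _ (hprmem s))
    · exact continuous_const.mul (huNtc.pow 2)
  have huN_eq' : ∀ y ∈ Icc (0:ℝ) T, uN N y = cN - ∫ r in (0:ℝ)..y, gN r := by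
    intro y hy
    rw [huN_eq N hN1 y hy]
    congr 1
    apply intervalIntegral.integral_congr
    intro r hr
    rw [Set.uIcc_of_le hy.1] at hr
    have hrT : r ∈ Icc (0:ℝ) T := ⟨hr.1, hr.2.trans hy.2⟩
    simp only [hgNdef, hprid r hrT]
  -- initial values
  have hu0 : u 0 = lam := by
    rw [hu_eq' 0 (left_mem_Icc.2 hT.le), intervalIntegral.integral_same, sub_zero]
  have huN0 : uN N 0 = cN := by
    rw [huN_eq' 0 (left_mem_Icc.2 hT.le), intervalIntegral.integral_same, sub_zero]
  -- |lam - cN| ≤ lam^2 / N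
  have hδ : |u 0 - uN N 0| ≤ lam ^ 2 / N := by
    rw [hu0, huN0]
    have hx0 : (0:ℝ) ≤ lam / N := div_nonneg hlam hNpos.le
    obtain ⟨hq1, hq2⟩ := exp_quad_bound hx0
    have hkey : lam - cN = (N:ℝ) * (Real.exp (-(lam / N)) - 1 + lam / N) := by
      rw [hcNdef]
      have : (N:ℝ) * (lam / N) = lam := by field_simp
      rw [neg_div] at *
      nlinarith [this]
    rw [abs_of_nonneg (by nlinarith [mul_nonneg hNpos.le hq1])]
    have : lam - cN ≤ (N:ℝ) * (lam / N) ^ 2 := by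
      rw [hkey]; exact mul_le_mul_of_nonneg_left hq2 hNpos.le
    calc lam - cN ≤ (N:ℝ) * (lam / N) ^ 2 := this
      _ = lam ^ 2 / N := by field_simp
  -- Gronwall
  set h : ℝ → ℝ := fun s => u s - uN N s with hhdef
  have hhc : ContinuousOn h (Icc 0 T) := hu_cont.sub (huN_cont N hN1)
  have hD : ∀ x : ℝ, HasDerivAt
      (fun s => (lam - ∫ r in (0:ℝ)..s, g r) - (cN - ∫ r in (0:ℝ)..s, gN r))
      (gN x - g x) x := by
    intro x
    have h1 : HasDerivAt (fun s => ∫ r in (0:ℝ)..s, g r) (g x) x :=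
      (hgc.integral_hasStrictDerivAt 0 x).hasDerivAt
    have h2 : HasDerivAt (fun s => ∫ r in (0:ℝ)..s, gN r) (gN x) x :=
      (hgNc.integral_hasStrictDerivAt 0 x).hasDerivAt
    have := ((hasDerivAt_const x lam).sub h1).sub ((hasDerivAt_const x cN).sub h2)
    exact this.congr_deriv (by ring)
  have hf' : ∀ x ∈ Ico (0:ℝ) T, HasDerivWithinAt h (gN x - g x) (Ici x) x := by
    intro x hx
    have hmem : Icc (0:ℝ) T ∈ nhdsWithin x (Ici x) := by
      apply mem_nhdsWithin.2
      exact ⟨Iio T, isOpen_Iio, hx.2, fun y hy => ⟨le_trans hx.1 hy.2, le_of_lt hy.1⟩⟩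
    have heq : ∀ y ∈ Icc (0:ℝ) T,
        h y = (lam - ∫ r in (0:ℝ)..y, g r) - (cN - ∫ r in (0:ℝ)..y, gN r) := by
      intro y hy
      rw [hhdef]
      dsimp only
      rw [hu_eq' y hy, huN_eq' y hy]
    have hxIcc : x ∈ Icc (0:ℝ) T := ⟨hx.1, hx.2.le⟩
    exact ((hD x).hasDerivWithinAt).congr_of_eventuallyEq
      (Filter.eventuallyEq_of_mem hmem heq) (heq x hxIcc)
  have hbound : ∀ x ∈ Ico (0:ℝ) T, ‖gN x - g x‖ ≤ K * ‖h x‖ + α * lam ^ 2 / N := by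
    intro x hx
    have hxIcc : x ∈ Icc (0:ℝ) T := ⟨hx.1, hx.2.le⟩
    have hprx : pr x = x := hprid x hxIcc
    have huNx := huN_mem N hN1 x hxIcc
    have hux := hu_mem x hxIcc
    have hlip := hψlip (uN N x) huNx (u x) hux
    have hsq : (uN N x) ^ 2 ≤ lam ^ 2 := by nlinarith [huNx.1, huNx.2]
    have hquad : (α / N) * (uN N x) ^ 2 ≤ α * lam ^ 2 / N := by
      have hαN : 0 ≤ α / (N:ℝ) := div_nonneg hα hNpos.le
      calc (α / N) * (uN N x) ^ 2 ≤ (α / N) * lam ^ 2 :=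
            mul_le_mul_of_nonneg_left hsq hαN
        _ = α * lam ^ 2 / N := by ring
    have hquad0 : 0 ≤ (α / N) * (uN N x) ^ 2 :=
      mul_nonneg (div_nonneg hα hNpos.le) (sq_nonneg _)
    have : gN x - g x = (ψ (uN N x) - ψ (u x)) + (α / N) * (uN N x) ^ 2 := by
      simp only [hgNdef, hgdef, hprx]; ring
    rw [Real.norm_eq_abs, Real.norm_eq_abs, this]
    calc |(ψ (uN N x) - ψ (u x)) + (α / N) * (uN N x) ^ 2|
        ≤ |ψ (uN N x) - ψ (u x)| + |(α / N) * (uN N x) ^ 2| := abs_add_le _ _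
      _ ≤ L * |uN N x - u x| + α * lam ^ 2 / N := by
          apply add_le_add hlip
          rw [abs_of_nonneg hquad0]; exact hquad
      _ ≤ K * |u x - uN N x| + α * lam ^ 2 / N := by
          rw [abs_sub_comm (uN N x) (u x)]
          have hK' : L * |u x - uN N x| ≤ K * |u x - uN N x| := by
            apply mul_le_mul_of_nonneg_right _ (abs_nonneg _)
            rw [hKdef]; linarith
          exact add_le_add_left hK' _
  have hgron := norm_le_gronwallBound_of_norm_deriv_right_le
    (δ := lam ^ 2 / N) (ε := α * lam ^ 2 / N) hhc hf'
    (by rw [Real.norm_eq_abs]; exact hδ) hbound t ht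
  rw [Real.norm_eq_abs, sub_zero] at hgron
  refine hgron.trans ?_
  rw [gronwallBound_of_K_ne_0 hK0.ne']
  show lam ^ 2 / N * Real.exp (K * t) +
      α * lam ^ 2 / N / K * (Real.exp (K * t) - 1) ≤ ε
  have he1 : Real.exp (K * t) ≤ Real.exp (K * T) :=
    Real.exp_le_exp.2 (mul_le_mul_of_nonneg_left ht.2 hK0.le)
  have he0 : (0:ℝ) < Real.exp (K * T) := Real.exp_pos _
  have hδ0 : (0:ℝ) ≤ lam ^ 2 / N := div_nonneg (sq_nonneg _) hNpos.le
  have hε0 : (0:ℝ) ≤ α * lam ^ 2 / N / K :=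
    div_nonneg (div_nonneg (mul_nonneg hα (sq_nonneg _)) hNpos.le) hK0.le
  have hstep : lam ^ 2 / N * Real.exp (K * t) +
      α * lam ^ 2 / N / K * (Real.exp (K * t) - 1) ≤ C0 / N := by
    have h2 : α * lam ^ 2 / N / K * (Real.exp (K * t) - 1) ≤
        α * lam ^ 2 / N / K * Real.exp (K * T) := by
      apply mul_le_mul_of_nonneg_left _ hε0
      linarith
    have h1 : lam ^ 2 / N * Real.exp (K * t) ≤ lam ^ 2 / N * Real.exp (K * T) :=
      mul_le_mul_of_nonneg_left he1 hδ0
    have : lam ^ 2 / N * Real.exp (K * T) + α * lam ^ 2 / N / K * Real.exp (K * T)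
        = C0 / N := by
      rw [hC0def]; field_simp
    linarith
  refine hstep.trans ?_
  rw [div_le_iff₀ hNpos]
  have hC00 : 0 ≤ C0 := by
    rw [hC0def]
    have : 0 ≤ α * lam ^ 2 / K := div_nonneg (mul_nonneg hα (sq_nonneg _)) hK0.le
    positivity
  have hN₁N : (N₁ : ℝ) ≤ N := by exact_mod_cast le_trans (le_max_left _ _) hN
  have : C0 / ε ≤ (N:ℝ) := le_trans hN₁ hN₁N
  calc C0 = (C0 / ε) * ε := by field_simp
    _ ≤ (N:ℝ) * ε := mul_le_mul_of_nonneg_right this hε.le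
    _ = ε * N := by ring
end

section
/- Let μ be a σ-finite measure on (0,∞) satisfying assumption (H): ∫₀^∞ (r ∨ r^p) μ(dr) < ∞ for some 1 < p < 2. For N ≥ 1 and k ≥ 1 set w_{k,N} = (1/(k+1)!) ∫₀^∞ (Nr)^{k+1} e^{−Nr} μ(dr). Then for every continuous function φ : [0,∞) → ℝ such that |φ(z)| ≤ C z for some constant C and all z ≥ 0, one has ∑_{k≥1} φ(k/N) w_{k,N} → ∫₀^∞ φ(z) μ(dz) as N → ∞. -/
open MeasureTheory Filter
open scoped ENNReal

namespace Stmt10Aux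



lemma sum0 (x : ℝ) : Summable (fun m : ℕ => x ^ m / m.factorial) :=
  Real.summable_pow_div_factorial x

lemma tsum0 (x : ℝ) : ∑' m : ℕ, x ^ m / m.factorial = Real.exp x := by
  rw [Real.exp_eq_exp_ℝ, NormedSpace.exp_eq_tsum_div]

lemma step1 (x : ℝ) (m : ℕ) :
    ((m + 1 : ℕ) : ℝ) * x ^ (m + 1) / (m + 1).factorial = x * (x ^ m / m.factorial) := by
  have h1 : (m.factorial : ℝ) ≠ 0 := Nat.cast_ne_zero.2 m.factorial_ne_zero
  have h2 : ((m : ℝ) + 1) ≠ 0 := by positivity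
  rw [Nat.factorial_succ]
  push_cast
  field_simp
  ring

lemma sum1 (x : ℝ) : Summable (fun m : ℕ => (m : ℝ) * x ^ m / m.factorial) := by
  rw [← summable_nat_add_iff 1]
  exact ((sum0 x).mul_left x).congr fun m => (step1 x m).symm

lemma tsum1 (x : ℝ) : ∑' m : ℕ, (m : ℝ) * x ^ m / m.factorial = x * Real.exp x := by
  rw [Summable.tsum_eq_zero_add (sum1 x)]
  simp only [Nat.cast_zero, zero_mul, zero_div, zero_add]
  calc ∑' m : ℕ, ((m + 1 : ℕ) : ℝ) * x ^ (m + 1) / (m + 1).factorial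
      = ∑' m : ℕ, x * (x ^ m / m.factorial) := tsum_congr fun m => step1 x m
    _ = x * Real.exp x := by rw [tsum_mul_left, tsum0]

lemma step2 (x : ℝ) (m : ℕ) :
    ((m + 1 : ℕ) : ℝ) ^ 2 * x ^ (m + 1) / (m + 1).factorial
      = x * ((m : ℝ) * x ^ m / m.factorial) + x * (x ^ m / m.factorial) := by
  have h1 : (m.factorial : ℝ) ≠ 0 := Nat.cast_ne_zero.2 m.factorial_ne_zero
  have h2 : ((m : ℝ) + 1) ≠ 0 := by positivity
  rw [Nat.factorial_succ]
  push_cast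
  field_simp
  ring

lemma sum2 (x : ℝ) : Summable (fun m : ℕ => (m : ℝ) ^ 2 * x ^ m / m.factorial) := by
  rw [← summable_nat_add_iff 1]
  exact (((sum1 x).mul_left x).add ((sum0 x).mul_left x)).congr fun m => (step2 x m).symm

lemma tsum2 (x : ℝ) : ∑' m : ℕ, (m : ℝ) ^ 2 * x ^ m / m.factorial
    = (x ^ 2 + x) * Real.exp x := by
  rw [Summable.tsum_eq_zero_add (sum2 x)]
  simp only [Nat.cast_zero, zero_pow, zero_mul, zero_div, zero_add, ne_eq, OfNat.ofNat_ne_zero,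
    not_false_eq_true]
  calc ∑' m : ℕ, ((m + 1 : ℕ) : ℝ) ^ 2 * x ^ (m + 1) / (m + 1).factorial
      = ∑' m : ℕ, (x * ((m : ℝ) * x ^ m / m.factorial) + x * (x ^ m / m.factorial)) :=
        tsum_congr fun m => step2 x m
    _ = x * (x * Real.exp x) + x * Real.exp x := by
        rw [Summable.tsum_add ((sum1 x).mul_left x) ((sum0 x).mul_left x), tsum_mul_left, tsum_mul_left,
          tsum0, tsum1]
    _ = (x ^ 2 + x) * Real.exp x := by ring

lemma step3 (x : ℝ) (m : ℕ) :
    ((m + 1 : ℕ) : ℝ) ^ 3 * x ^ (m + 1) / (m + 1).factorial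
      = x * ((m : ℝ) ^ 2 * x ^ m / m.factorial) + 2 * x * ((m : ℝ) * x ^ m / m.factorial)
        + x * (x ^ m / m.factorial) := by
  have h1 : (m.factorial : ℝ) ≠ 0 := Nat.cast_ne_zero.2 m.factorial_ne_zero
  have h2 : ((m : ℝ) + 1) ≠ 0 := by positivity
  rw [Nat.factorial_succ]
  push_cast
  field_simp
  ring

lemma sum3 (x : ℝ) : Summable (fun m : ℕ => (m : ℝ) ^ 3 * x ^ m / m.factorial) := by
  rw [← summable_nat_add_iff 1]
  exact ((((sum2 x).mul_left x).add ((sum1 x).mul_left (2 * x))).add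
    ((sum0 x).mul_left x)).congr fun m => (step3 x m).symm

lemma tsum3 (x : ℝ) : ∑' m : ℕ, (m : ℝ) ^ 3 * x ^ m / m.factorial
    = (x ^ 3 + 3 * x ^ 2 + x) * Real.exp x := by
  rw [Summable.tsum_eq_zero_add (sum3 x)]
  simp only [Nat.cast_zero, zero_pow, zero_mul, zero_div, zero_add, ne_eq, OfNat.ofNat_ne_zero,
    not_false_eq_true]
  calc ∑' m : ℕ, ((m + 1 : ℕ) : ℝ) ^ 3 * x ^ (m + 1) / (m + 1).factorial
      = ∑' m : ℕ, (x * ((m : ℝ) ^ 2 * x ^ m / m.factorial)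
          + 2 * x * ((m : ℝ) * x ^ m / m.factorial) + x * (x ^ m / m.factorial)) :=
        tsum_congr fun m => step3 x m
    _ = (x * ((x ^ 2 + x) * Real.exp x) + 2 * x * (x * Real.exp x)) + x * Real.exp x := by
        rw [Summable.tsum_add ((((sum2 x).mul_left x)).add ((sum1 x).mul_left (2 * x)))
            ((sum0 x).mul_left x),
          Summable.tsum_add ((sum2 x).mul_left x) ((sum1 x).mul_left (2 * x)),
          tsum_mul_left, tsum_mul_left, tsum_mul_left, tsum0, tsum1, tsum2]
    _ = (x ^ 3 + 3 * x ^ 2 + x) * Real.exp x := by ring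


lemma expandc2 (x : ℝ) (m : ℕ) : ((m : ℝ) - x) ^ 2 * x ^ m / m.factorial
    = (m : ℝ) ^ 2 * x ^ m / m.factorial - 2 * x * ((m : ℝ) * x ^ m / m.factorial)
      + x ^ 2 * (x ^ m / m.factorial) := by ring

lemma sumc2 (x : ℝ) : Summable (fun m : ℕ => ((m : ℝ) - x) ^ 2 * x ^ m / m.factorial) :=
  (((sum2 x).sub ((sum1 x).mul_left (2 * x))).add ((sum0 x).mul_left (x ^ 2))).congr
    fun m => (expandc2 x m).symm

lemma tsumc2 (x : ℝ) : ∑' m : ℕ, ((m : ℝ) - x) ^ 2 * x ^ m / m.factorial = x * Real.exp x := by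
  calc ∑' m : ℕ, ((m : ℝ) - x) ^ 2 * x ^ m / m.factorial
      = ∑' m : ℕ, ((m : ℝ) ^ 2 * x ^ m / m.factorial - 2 * x * ((m : ℝ) * x ^ m / m.factorial)
          + x ^ 2 * (x ^ m / m.factorial)) := tsum_congr fun m => expandc2 x m
    _ = ((x ^ 2 + x) * Real.exp x - 2 * x * (x * Real.exp x)) + x ^ 2 * Real.exp x := by
        rw [Summable.tsum_add ((sum2 x).sub ((sum1 x).mul_left (2 * x))) ((sum0 x).mul_left (x ^ 2)),
          Summable.tsum_sub (sum2 x) ((sum1 x).mul_left (2 * x)), tsum_mul_left, tsum_mul_left,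
          tsum0, tsum1, tsum2]
    _ = x * Real.exp x := by ring

lemma expandc3 (x : ℝ) (m : ℕ) : (m : ℝ) * ((m : ℝ) - x) ^ 2 * x ^ m / m.factorial
    = (m : ℝ) ^ 3 * x ^ m / m.factorial - 2 * x * ((m : ℝ) ^ 2 * x ^ m / m.factorial)
      + x ^ 2 * ((m : ℝ) * x ^ m / m.factorial) := by ring

lemma sumc3 (x : ℝ) :
    Summable (fun m : ℕ => (m : ℝ) * ((m : ℝ) - x) ^ 2 * x ^ m / m.factorial) :=
  (((sum3 x).sub ((sum2 x).mul_left (2 * x))).add ((sum1 x).mul_left (x ^ 2))).congr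
    fun m => (expandc3 x m).symm

lemma tsumc3 (x : ℝ) : ∑' m : ℕ, (m : ℝ) * ((m : ℝ) - x) ^ 2 * x ^ m / m.factorial
    = (x ^ 2 + x) * Real.exp x := by
  calc ∑' m : ℕ, (m : ℝ) * ((m : ℝ) - x) ^ 2 * x ^ m / m.factorial
      = ∑' m : ℕ, ((m : ℝ) ^ 3 * x ^ m / m.factorial
          - 2 * x * ((m : ℝ) ^ 2 * x ^ m / m.factorial)
          + x ^ 2 * ((m : ℝ) * x ^ m / m.factorial)) := tsum_congr fun m => expandc3 x m
    _ = ((x ^ 3 + 3 * x ^ 2 + x) * Real.exp x - 2 * x * ((x ^ 2 + x) * Real.exp x))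
          + x ^ 2 * (x * Real.exp x) := by
        rw [Summable.tsum_add ((sum3 x).sub ((sum2 x).mul_left (2 * x))) ((sum1 x).mul_left (x ^ 2)),
          Summable.tsum_sub (sum3 x) ((sum2 x).mul_left (2 * x)), tsum_mul_left, tsum_mul_left,
          tsum1, tsum2, tsum3]
    _ = (x ^ 2 + x) * Real.exp x := by ring

lemma shift2_summable {f : ℕ → ℝ} (hf : Summable f) : Summable (fun k : ℕ => f (k + 2)) :=
  (summable_nat_add_iff 2).mpr hf

lemma tsum_shift2_le {f : ℕ → ℝ} (hf : Summable f) (h0 : ∀ m, 0 ≤ f m) :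
    ∑' k : ℕ, f (k + 2) ≤ ∑' m : ℕ, f m :=
  Summable.tsum_le_tsum_of_inj (fun k => k + 2) (fun a b h => by simpa using h) (fun c _ => h0 c)
    (fun k => le_rfl) (shift2_summable hf) hf

lemma tsum_shift2_eq {f : ℕ → ℝ} (hf : Summable f) :
    ∑' m : ℕ, f m = f 0 + f 1 + ∑' k : ℕ, f (k + 2) := by
  rw [Summable.tsum_eq_zero_add hf, Summable.tsum_eq_zero_add ((summable_nat_add_iff 1).mpr hf)]
  have : ∀ b : ℕ, b + 1 + 1 = b + 2 := fun b => rfl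
  simp only [this]
  ring



/-- Summability and ℓ¹ bound for the basic summand. -/
lemma abs_bound (φ : ℝ → ℝ) (Cφ : ℝ) (hC : 0 ≤ Cφ)
    (hφbound : ∀ z, 0 ≤ z → |φ z| ≤ Cφ * z) (r : ℝ) (hr : 0 < r) (N : ℕ) (hN : 1 ≤ N) :
    Summable (fun k : ℕ => |φ (((k : ℝ) + 1) / N) *
        (((N : ℝ) * r) ^ (k + 2) * Real.exp (-((N : ℝ) * r)) / (k + 2).factorial)|) ∧
    ∑' k : ℕ, |φ (((k : ℝ) + 1) / N) *
        (((N : ℝ) * r) ^ (k + 2) * Real.exp (-((N : ℝ) * r)) / (k + 2).factorial)| ≤ Cφ * r := by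
  have hNpos : (0 : ℝ) < N := by exact_mod_cast Nat.lt_of_lt_of_le Nat.zero_lt_one hN
  set x : ℝ := (N : ℝ) * r with hxdef
  have hx0 : (0 : ℝ) ≤ x := by positivity
  have hqnn : ∀ m : ℕ, (0 : ℝ) ≤ x ^ m * Real.exp (-x) / m.factorial := fun m => by positivity
  have hqm : Summable (fun m : ℕ => (m : ℝ) * x ^ m * Real.exp (-x) / m.factorial) :=
    ((sum1 x).mul_right (Real.exp (-x))).congr fun m => by ring
  have hqmnn : ∀ m : ℕ, (0 : ℝ) ≤ (m : ℝ) * x ^ m * Real.exp (-x) / m.factorial := fun m => by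
    positivity
  have htqm : ∑' m : ℕ, (m : ℝ) * x ^ m * Real.exp (-x) / m.factorial = x := by
    calc ∑' m : ℕ, (m : ℝ) * x ^ m * Real.exp (-x) / m.factorial
        = ∑' m : ℕ, ((m : ℝ) * x ^ m / m.factorial) * Real.exp (-x) :=
          tsum_congr fun m => by ring
      _ = (x * Real.exp x) * Real.exp (-x) := by rw [tsum_mul_right, tsum1]
      _ = x := by rw [mul_assoc, ← Real.exp_add]; simp
  -- the shifted comparison sequence
  have hs : Summable (fun k : ℕ =>
      ((k : ℝ) + 2) * x ^ (k + 2) * Real.exp (-x) / (k + 2).factorial) :=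
    (shift2_summable hqm).congr fun k => by push_cast; ring
  have hs_le : ∑' k : ℕ, ((k : ℝ) + 2) * x ^ (k + 2) * Real.exp (-x) / (k + 2).factorial ≤ x := by
    calc ∑' k : ℕ, ((k : ℝ) + 2) * x ^ (k + 2) * Real.exp (-x) / (k + 2).factorial
        = ∑' k : ℕ, (fun m : ℕ => (m : ℝ) * x ^ m * Real.exp (-x) / m.factorial) (k + 2) :=
          tsum_congr fun k => by push_cast; ring
      _ ≤ ∑' m : ℕ, (m : ℝ) * x ^ m * Real.exp (-x) / m.factorial :=
          tsum_shift2_le hqm hqmnn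
      _ = x := htqm
  have hper : ∀ k : ℕ, |φ (((k : ℝ) + 1) / N) *
      (x ^ (k + 2) * Real.exp (-x) / (k + 2).factorial)|
      ≤ (Cφ / N) * (((k : ℝ) + 2) * x ^ (k + 2) * Real.exp (-x) / (k + 2).factorial) := by
    intro k
    have hz0 : (0 : ℝ) ≤ ((k : ℝ) + 1) / N := by positivity
    rw [abs_mul, abs_of_nonneg (hqnn (k + 2))]
    calc |φ (((k : ℝ) + 1) / N)| * (x ^ (k + 2) * Real.exp (-x) / (k + 2).factorial)
        ≤ (Cφ * (((k : ℝ) + 1) / N)) * (x ^ (k + 2) * Real.exp (-x) / (k + 2).factorial) :=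
          mul_le_mul_of_nonneg_right (hφbound _ hz0) (hqnn (k + 2))
      _ ≤ (Cφ * (((k : ℝ) + 2) / N)) * (x ^ (k + 2) * Real.exp (-x) / (k + 2).factorial) := by
          gcongr
          linarith
      _ = (Cφ / N) * (((k : ℝ) + 2) * x ^ (k + 2) * Real.exp (-x) / (k + 2).factorial) := by
          ring
  have hA : Summable (fun k : ℕ => |φ (((k : ℝ) + 1) / N) *
      (x ^ (k + 2) * Real.exp (-x) / (k + 2).factorial)|) :=
    Summable.of_nonneg_of_le (fun k => abs_nonneg _) hper (hs.mul_left (Cφ / N))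
  refine ⟨hA, ?_⟩
  calc ∑' k : ℕ, |φ (((k : ℝ) + 1) / N) *
      (x ^ (k + 2) * Real.exp (-x) / (k + 2).factorial)|
      ≤ ∑' k : ℕ, (Cφ / N) * (((k : ℝ) + 2) * x ^ (k + 2) * Real.exp (-x) / (k + 2).factorial) :=
        Summable.tsum_le_tsum hper hA (hs.mul_left (Cφ / N))
    _ = (Cφ / N) * ∑' k : ℕ, ((k : ℝ) + 2) * x ^ (k + 2) * Real.exp (-x) / (k + 2).factorial :=
        tsum_mul_left
    _ ≤ (Cφ / N) * x := by
        apply mul_le_mul_of_nonneg_left hs_le (by positivity)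
    _ = Cφ * r := by rw [hxdef]; field_simp

set_option maxHeartbeats 1000000 in
/-- Pointwise convergence of the Poisson-type sums. -/
lemma pointwise (φ : ℝ → ℝ) (hφcont : ContinuousOn φ (Set.Ici 0)) (Cφ : ℝ) (hC : 0 ≤ Cφ)
    (hφbound : ∀ z, 0 ≤ z → |φ z| ≤ Cφ * z) (r : ℝ) (hr : 0 < r) :
    Tendsto (fun N : ℕ => ∑' k : ℕ, φ (((k : ℝ) + 1) / N) *
        (((N : ℝ) * r) ^ (k + 2) * Real.exp (-((N : ℝ) * r)) / (k + 2).factorial))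
      atTop (nhds (φ r)) := by
  rw [Metric.tendsto_nhds]
  intro ε hε
  have hcw := hφcont r (le_of_lt hr)
  rw [Metric.continuousWithinAt_iff] at hcw
  obtain ⟨δ, hδpos, hδ⟩ := hcw (ε / 2) (by positivity)
  set δ' : ℝ := min δ r with hδ'def
  have hδ'pos : 0 < δ' := lt_min hδpos hr
  have hδ'leδ : δ' ≤ δ := min_le_left _ _
  set FF : ℕ → ℝ := fun N => (8 * Cφ * r ^ 2 / δ' ^ 2) * (1 / (N : ℝ))
      + (4 * Cφ * r / δ' ^ 2) * (1 / (N : ℝ) * (1 / (N : ℝ))) with hFFdef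
  set GG : ℕ → ℝ := fun N => Cφ * r * ((1 + (N : ℝ) * r) * Real.exp (-((N : ℝ) * r)))
    with hGGdef
  have hFF0 : Tendsto FF atTop (nhds 0) := by
    have h1 : Tendsto (fun n : ℕ => 1 / (n : ℝ)) atTop (nhds 0) := tendsto_one_div_atTop_nhds_zero_nat
    have h2 := (tendsto_const_nhds (x := (8 * Cφ * r ^ 2 / δ' ^ 2))).mul h1
    have h3 := (tendsto_const_nhds (x := (4 * Cφ * r / δ' ^ 2))).mul (h1.mul h1)
    have := h2.add h3
    simpa [hFFdef, one_div] using this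
  have hGG0 : Tendsto GG atTop (nhds 0) := by
    have hx : Tendsto (fun N : ℕ => (N : ℝ) * r) atTop atTop :=
      tendsto_natCast_atTop_atTop.atTop_mul_const hr
    have h1 : Tendsto (fun t : ℝ => (1 + t) * Real.exp (-t)) atTop (nhds 0) := by
      have h2 := Real.tendsto_exp_neg_atTop_nhds_zero
      have h3 := Real.tendsto_pow_mul_exp_neg_atTop_nhds_zero 1
      simp only [pow_one] at h3
      have h4 := h2.add h3
      rw [add_zero] at h4
      refine h4.congr fun t => ?_
      ring
    have h5 := (h1.comp hx).const_mul (Cφ * r)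
    simpa [Function.comp, hGGdef, mul_zero] using h5
  have hev2 : ∀ᶠ N : ℕ in atTop, FF N + GG N < ε / 2 := by
    have h0 : Tendsto (fun N => FF N + GG N) atTop (nhds 0) := by
      simpa using hFF0.add hGG0
    exact h0.eventually_lt_const (by positivity)
  have hevNδ : ∀ᶠ N : ℕ in atTop, 2 ≤ (N : ℝ) * δ' :=
    (tendsto_natCast_atTop_atTop.atTop_mul_const hδ'pos).eventually_ge_atTop 2
  filter_upwards [eventually_ge_atTop 1, hevNδ, hev2] with N hN1 hNδ hFG
  have hNpos : (0 : ℝ) < N := by exact_mod_cast Nat.lt_of_lt_of_le Nat.zero_lt_one hN1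
  rw [Real.dist_eq]
  set x : ℝ := (N : ℝ) * r with hxdef
  have hx0 : (0 : ℝ) ≤ x := by positivity
  have hqnn : ∀ m : ℕ, (0 : ℝ) ≤ x ^ m * Real.exp (-x) / m.factorial := fun m => by positivity
  -- summability / values of the basic Poisson sums
  have hq : Summable (fun m : ℕ => x ^ m * Real.exp (-x) / m.factorial) :=
    ((sum0 x).mul_right (Real.exp (-x))).congr fun m => by ring
  have htq : ∑' m : ℕ, x ^ m * Real.exp (-x) / m.factorial = 1 := by
    calc ∑' m : ℕ, x ^ m * Real.exp (-x) / m.factorial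
        = ∑' m : ℕ, (x ^ m / m.factorial) * Real.exp (-x) := tsum_congr fun m => by ring
      _ = Real.exp x * Real.exp (-x) := by rw [tsum_mul_right, tsum0]
      _ = 1 := by rw [← Real.exp_add]; simp
  have hqc2 : Summable (fun m : ℕ =>
      ((m : ℝ) - x) ^ 2 * x ^ m * Real.exp (-x) / m.factorial) :=
    ((sumc2 x).mul_right (Real.exp (-x))).congr fun m => by ring
  have htqc2 : ∑' m : ℕ, ((m : ℝ) - x) ^ 2 * x ^ m * Real.exp (-x) / m.factorial = x := by
    calc ∑' m : ℕ, ((m : ℝ) - x) ^ 2 * x ^ m * Real.exp (-x) / m.factorial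
        = ∑' m : ℕ, (((m : ℝ) - x) ^ 2 * x ^ m / m.factorial) * Real.exp (-x) :=
          tsum_congr fun m => by ring
      _ = (x * Real.exp x) * Real.exp (-x) := by rw [tsum_mul_right, tsumc2]
      _ = x := by rw [mul_assoc, ← Real.exp_add]; simp
  have hqc3 : Summable (fun m : ℕ =>
      (m : ℝ) * ((m : ℝ) - x) ^ 2 * x ^ m * Real.exp (-x) / m.factorial) :=
    ((sumc3 x).mul_right (Real.exp (-x))).congr fun m => by ring
  have htqc3 : ∑' m : ℕ,
      (m : ℝ) * ((m : ℝ) - x) ^ 2 * x ^ m * Real.exp (-x) / m.factorial = x ^ 2 + x := by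
    calc ∑' m : ℕ, (m : ℝ) * ((m : ℝ) - x) ^ 2 * x ^ m * Real.exp (-x) / m.factorial
        = ∑' m : ℕ, ((m : ℝ) * ((m : ℝ) - x) ^ 2 * x ^ m / m.factorial) * Real.exp (-x) :=
          tsum_congr fun m => by ring
      _ = ((x ^ 2 + x) * Real.exp x) * Real.exp (-x) := by rw [tsum_mul_right, tsumc3]
      _ = x ^ 2 + x := by rw [mul_assoc, ← Real.exp_add]; simp
  -- summability of the main sequence
  have habs := abs_bound φ Cφ hC hφbound r hr N hN1
  rw [← hxdef] at habs
  have ha : Summable (fun k : ℕ => φ (((k : ℝ) + 1) / N) *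
      (x ^ (k + 2) * Real.exp (-x) / (k + 2).factorial)) := by
    rw [← summable_abs_iff]
    exact habs.1
  have hqshift : Summable (fun k : ℕ =>
      φ r * (x ^ (k + 2) * Real.exp (-x) / (k + 2).factorial)) :=
    (shift2_summable hq).mul_left (φ r)
  -- the difference sequence u
  have hu : Summable (fun k : ℕ =>
      (φ (((k : ℝ) + 1) / N) - φ r) * (x ^ (k + 2) * Real.exp (-x) / (k + 2).factorial)) :=
    (ha.sub hqshift).congr fun k => by ring
  -- decomposition of (∑ a) - φ r
  have hdecomp : (∑' k : ℕ, φ (((k : ℝ) + 1) / N) *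
        (x ^ (k + 2) * Real.exp (-x) / (k + 2).factorial)) - φ r
      = (∑' k : ℕ, (φ (((k : ℝ) + 1) / N) - φ r) *
          (x ^ (k + 2) * Real.exp (-x) / (k + 2).factorial))
        - φ r * (x ^ 0 * Real.exp (-x) / Nat.factorial 0)
        - φ r * (x ^ 1 * Real.exp (-x) / Nat.factorial 1) := by
    have h1 : ∑' k : ℕ, (φ (((k : ℝ) + 1) / N) - φ r) *
        (x ^ (k + 2) * Real.exp (-x) / (k + 2).factorial)
        = (∑' k : ℕ, φ (((k : ℝ) + 1) / N) *
            (x ^ (k + 2) * Real.exp (-x) / (k + 2).factorial))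
          - ∑' k : ℕ, φ r * (x ^ (k + 2) * Real.exp (-x) / (k + 2).factorial) := by
      rw [← Summable.tsum_sub ha hqshift]
      exact tsum_congr fun k => by ring
    have h2 := tsum_shift2_eq (hq.mul_left (φ r))
    rw [tsum_mul_left, htq, mul_one] at h2
    linarith
  -- the far-field comparison sum
  have hG : Summable (fun m : ℕ => ((m : ℝ) / N + r) * ((m : ℝ) - x) ^ 2 *
      (x ^ m * Real.exp (-x) / m.factorial)) :=
    ((hqc3.mul_left (1 / (N : ℝ))).add (hqc2.mul_left r)).congr fun m => by ring
  have hGnn : ∀ m : ℕ, (0 : ℝ) ≤ ((m : ℝ) / N + r) * ((m : ℝ) - x) ^ 2 *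
      (x ^ m * Real.exp (-x) / m.factorial) := fun m => by positivity
  have htG : ∑' m : ℕ, ((m : ℝ) / N + r) * ((m : ℝ) - x) ^ 2 *
      (x ^ m * Real.exp (-x) / m.factorial) = (1 / (N : ℝ)) * (x ^ 2 + x) + r * x := by
    calc ∑' m : ℕ, ((m : ℝ) / N + r) * ((m : ℝ) - x) ^ 2 *
        (x ^ m * Real.exp (-x) / m.factorial)
        = ∑' m : ℕ, ((1 / (N : ℝ)) *
            ((m : ℝ) * ((m : ℝ) - x) ^ 2 * x ^ m * Real.exp (-x) / m.factorial)
          + r * (((m : ℝ) - x) ^ 2 * x ^ m * Real.exp (-x) / m.factorial)) :=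
          tsum_congr fun m => by ring
      _ = (1 / (N : ℝ)) * (x ^ 2 + x) + r * x := by
          rw [Summable.tsum_add (hqc3.mul_left (1 / (N : ℝ))) (hqc2.mul_left r),
            tsum_mul_left, tsum_mul_left, htqc2, htqc3]
  have hfar_sum : Summable (fun k : ℕ => (((k : ℝ) + 2) / N + r) * (((k : ℝ) + 2) - x) ^ 2 *
      (x ^ (k + 2) * Real.exp (-x) / (k + 2).factorial)) :=
    (shift2_summable hG).congr fun k => by push_cast; ring
  have hfar_le : ∑' k : ℕ, (((k : ℝ) + 2) / N + r) * (((k : ℝ) + 2) - x) ^ 2 *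
      (x ^ (k + 2) * Real.exp (-x) / (k + 2).factorial)
      ≤ (1 / (N : ℝ)) * (x ^ 2 + x) + r * x := by
    calc ∑' k : ℕ, (((k : ℝ) + 2) / N + r) * (((k : ℝ) + 2) - x) ^ 2 *
        (x ^ (k + 2) * Real.exp (-x) / (k + 2).factorial)
        = ∑' k : ℕ, (fun m : ℕ => ((m : ℝ) / N + r) * ((m : ℝ) - x) ^ 2 *
            (x ^ m * Real.exp (-x) / m.factorial)) (k + 2) :=
          tsum_congr fun k => by push_cast; ring
      _ ≤ ∑' m : ℕ, ((m : ℝ) / N + r) * ((m : ℝ) - x) ^ 2 *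
            (x ^ m * Real.exp (-x) / m.factorial) := tsum_shift2_le hG hGnn
      _ = (1 / (N : ℝ)) * (x ^ 2 + x) + r * x := htG
  -- per-term estimate
  have hperterm : ∀ k : ℕ, |(φ (((k : ℝ) + 1) / N) - φ r) *
      (x ^ (k + 2) * Real.exp (-x) / (k + 2).factorial)|
      ≤ (ε / 2) * (x ^ (k + 2) * Real.exp (-x) / (k + 2).factorial)
        + (4 * Cφ / ((N : ℝ) ^ 2 * δ' ^ 2)) *
          ((((k : ℝ) + 2) / N + r) * (((k : ℝ) + 2) - x) ^ 2 *
            (x ^ (k + 2) * Real.exp (-x) / (k + 2).factorial)) := by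
    intro k
    have hz0 : (0 : ℝ) ≤ ((k : ℝ) + 1) / N := by positivity
    have hq2 := hqnn (k + 2)
    have hcoefnn : (0 : ℝ) ≤ 4 * Cφ / ((N : ℝ) ^ 2 * δ' ^ 2) := by positivity
    have hfarnn : (0 : ℝ) ≤ (((k : ℝ) + 2) / N + r) * (((k : ℝ) + 2) - x) ^ 2 *
        (x ^ (k + 2) * Real.exp (-x) / (k + 2).factorial) := by positivity
    rw [abs_mul, abs_of_nonneg hq2]
    by_cases hnear : |((k : ℝ) + 1) / N - r| < δ'
    · have hdist : dist (((k : ℝ) + 1) / N) r < δ := by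
        rw [Real.dist_eq]; exact lt_of_lt_of_le hnear hδ'leδ
      have hlt := hδ hz0 hdist
      rw [Real.dist_eq] at hlt
      have h1 : |φ (((k : ℝ) + 1) / N) - φ r| *
          (x ^ (k + 2) * Real.exp (-x) / (k + 2).factorial)
          ≤ (ε / 2) * (x ^ (k + 2) * Real.exp (-x) / (k + 2).factorial) :=
        mul_le_mul_of_nonneg_right (le_of_lt hlt) hq2
      linarith [mul_nonneg hcoefnn hfarnn]
    · push_neg at hnear
      have hNz : ((k : ℝ) + 1) - x = (N : ℝ) * (((k : ℝ) + 1) / N - r) := by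
        have hNk : (N : ℝ) * (((k : ℝ) + 1) / N) = (k : ℝ) + 1 := by
          rw [mul_comm, div_mul_cancel₀ _ (ne_of_gt hNpos)]
        rw [mul_sub, hNk, hxdef]
      have h1 : (N : ℝ) * δ' ≤ |((k : ℝ) + 1) - x| := by
        rw [hNz, abs_mul, abs_of_nonneg (le_of_lt hNpos)]
        exact mul_le_mul_of_nonneg_left hnear (le_of_lt hNpos)
      have h2 : |((k : ℝ) + 1) - x| - 1 ≤ |((k : ℝ) + 2) - x| := by
        have h3 := abs_sub_abs_le_abs_sub (((k : ℝ) + 1) - x) (-1)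
        rw [abs_neg, abs_one] at h3
        have h4 : ((k : ℝ) + 1) - x - (-1) = ((k : ℝ) + 2) - x := by ring
        rw [h4] at h3
        exact h3
      have h5 : (N : ℝ) * δ' / 2 ≤ |((k : ℝ) + 2) - x| := by linarith
      have h6 : ((N : ℝ) * δ' / 2) ^ 2 ≤ (((k : ℝ) + 2) - x) ^ 2 := by
        have := pow_le_pow_left₀ (by positivity) h5 2
        rwa [sq_abs] at this
      have h7 : (1 : ℝ) ≤ 4 / ((N : ℝ) ^ 2 * δ' ^ 2) * (((k : ℝ) + 2) - x) ^ 2 := by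
        have hpos : (0 : ℝ) < (N : ℝ) ^ 2 * δ' ^ 2 := by positivity
        rw [div_mul_eq_mul_div, le_div_iff₀ hpos]
        nlinarith
      have h8 : |φ (((k : ℝ) + 1) / N) - φ r| ≤ Cφ * (((k : ℝ) + 2) / N + r) := by
        calc |φ (((k : ℝ) + 1) / N) - φ r| ≤ |φ (((k : ℝ) + 1) / N)| + |φ r| := abs_sub _ _
          _ ≤ Cφ * (((k : ℝ) + 1) / N) + Cφ * r :=
            add_le_add (hφbound _ hz0) (hφbound r (le_of_lt hr))
          _ ≤ Cφ * (((k : ℝ) + 2) / N) + Cφ * r := by gcongr <;> linarith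
          _ = Cφ * (((k : ℝ) + 2) / N + r) := by ring
      have h9 : |φ (((k : ℝ) + 1) / N) - φ r| *
          (x ^ (k + 2) * Real.exp (-x) / (k + 2).factorial)
          ≤ (Cφ * (((k : ℝ) + 2) / N + r)) *
            (x ^ (k + 2) * Real.exp (-x) / (k + 2).factorial) :=
        mul_le_mul_of_nonneg_right h8 hq2
      have h10 : (Cφ * (((k : ℝ) + 2) / N + r)) *
          (x ^ (k + 2) * Real.exp (-x) / (k + 2).factorial)
          ≤ ((Cφ * (((k : ℝ) + 2) / N + r)) *
            (x ^ (k + 2) * Real.exp (-x) / (k + 2).factorial)) *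
            (4 / ((N : ℝ) ^ 2 * δ' ^ 2) * (((k : ℝ) + 2) - x) ^ 2) := by
        apply le_mul_of_one_le_right _ h7
        have : (0 : ℝ) ≤ ((k : ℝ) + 2) / N + r := by positivity
        positivity
      have h11 : ((Cφ * (((k : ℝ) + 2) / N + r)) *
          (x ^ (k + 2) * Real.exp (-x) / (k + 2).factorial)) *
          (4 / ((N : ℝ) ^ 2 * δ' ^ 2) * (((k : ℝ) + 2) - x) ^ 2)
          = (4 * Cφ / ((N : ℝ) ^ 2 * δ' ^ 2)) *
            ((((k : ℝ) + 2) / N + r) * (((k : ℝ) + 2) - x) ^ 2 *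
              (x ^ (k + 2) * Real.exp (-x) / (k + 2).factorial)) := by ring
      have hq2' : (0 : ℝ) ≤ (ε / 2) * (x ^ (k + 2) * Real.exp (-x) / (k + 2).factorial) := by
        positivity
      linarith [h9.trans (h10.trans_eq h11)]
  -- summing up
  have hRHSsum : Summable (fun k : ℕ =>
      (ε / 2) * (x ^ (k + 2) * Real.exp (-x) / (k + 2).factorial)
      + (4 * Cφ / ((N : ℝ) ^ 2 * δ' ^ 2)) *
        ((((k : ℝ) + 2) / N + r) * (((k : ℝ) + 2) - x) ^ 2 *
          (x ^ (k + 2) * Real.exp (-x) / (k + 2).factorial))) :=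
    ((shift2_summable hq).mul_left (ε / 2)).add
      (hfar_sum.mul_left (4 * Cφ / ((N : ℝ) ^ 2 * δ' ^ 2)))
  have hsumu : ∑' k : ℕ, |(φ (((k : ℝ) + 1) / N) - φ r) *
      (x ^ (k + 2) * Real.exp (-x) / (k + 2).factorial)|
      ≤ ε / 2 + (4 * Cφ / ((N : ℝ) ^ 2 * δ' ^ 2)) *
        ((1 / (N : ℝ)) * (x ^ 2 + x) + r * x) := by
    calc ∑' k : ℕ, |(φ (((k : ℝ) + 1) / N) - φ r) *
        (x ^ (k + 2) * Real.exp (-x) / (k + 2).factorial)|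
        ≤ ∑' k : ℕ, ((ε / 2) * (x ^ (k + 2) * Real.exp (-x) / (k + 2).factorial)
          + (4 * Cφ / ((N : ℝ) ^ 2 * δ' ^ 2)) *
            ((((k : ℝ) + 2) / N + r) * (((k : ℝ) + 2) - x) ^ 2 *
              (x ^ (k + 2) * Real.exp (-x) / (k + 2).factorial))) :=
          Summable.tsum_le_tsum hperterm hu.abs hRHSsum
      _ = (ε / 2) * (∑' k : ℕ, x ^ (k + 2) * Real.exp (-x) / (k + 2).factorial)
          + (4 * Cφ / ((N : ℝ) ^ 2 * δ' ^ 2)) *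
            ∑' k : ℕ, (((k : ℝ) + 2) / N + r) * (((k : ℝ) + 2) - x) ^ 2 *
              (x ^ (k + 2) * Real.exp (-x) / (k + 2).factorial) := by
          rw [Summable.tsum_add ((shift2_summable hq).mul_left (ε / 2))
            (hfar_sum.mul_left (4 * Cφ / ((N : ℝ) ^ 2 * δ' ^ 2))), tsum_mul_left, tsum_mul_left]
      _ ≤ (ε / 2) * 1 + (4 * Cφ / ((N : ℝ) ^ 2 * δ' ^ 2)) *
            ((1 / (N : ℝ)) * (x ^ 2 + x) + r * x) := by
          have hb1 : ∑' k : ℕ, x ^ (k + 2) * Real.exp (-x) / (k + 2).factorial ≤ 1 := by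
            calc ∑' k : ℕ, x ^ (k + 2) * Real.exp (-x) / (k + 2).factorial
                ≤ ∑' m : ℕ, x ^ m * Real.exp (-x) / m.factorial := tsum_shift2_le hq hqnn
              _ = 1 := htq
          have hc1 : (0 : ℝ) ≤ 4 * Cφ / ((N : ℝ) ^ 2 * δ' ^ 2) := by positivity
          have := mul_le_mul_of_nonneg_left hfar_le hc1
          have := mul_le_mul_of_nonneg_left hb1 (by positivity : (0:ℝ) ≤ ε / 2)
          linarith
      _ = ε / 2 + (4 * Cφ / ((N : ℝ) ^ 2 * δ' ^ 2)) *
            ((1 / (N : ℝ)) * (x ^ 2 + x) + r * x) := by ring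
  have hcoef_eq : (4 * Cφ / ((N : ℝ) ^ 2 * δ' ^ 2)) *
      ((1 / (N : ℝ)) * (x ^ 2 + x) + r * x) = FF N := by
    rw [hxdef, hFFdef]
    have hN0 : (N : ℝ) ≠ 0 := ne_of_gt hNpos
    have hδ'0 : δ' ≠ 0 := ne_of_gt hδ'pos
    field_simp
    ring
  have hnorm : |∑' k : ℕ, (φ (((k : ℝ) + 1) / N) - φ r) *
      (x ^ (k + 2) * Real.exp (-x) / (k + 2).factorial)|
      ≤ ∑' k : ℕ, |(φ (((k : ℝ) + 1) / N) - φ r) *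
        (x ^ (k + 2) * Real.exp (-x) / (k + 2).factorial)| := by
    have := norm_tsum_le_tsum_norm (f := fun k : ℕ => (φ (((k : ℝ) + 1) / N) - φ r) *
      (x ^ (k + 2) * Real.exp (-x) / (k + 2).factorial))
      (by simpa only [Real.norm_eq_abs] using hu.abs)
    simpa only [Real.norm_eq_abs] using this
  -- tail terms
  have htail : |φ r * (x ^ 0 * Real.exp (-x) / Nat.factorial 0)|
      + |φ r * (x ^ 1 * Real.exp (-x) / Nat.factorial 1)| ≤ GG N := by
    have hφr := hφbound r (le_of_lt hr)
    have he : (0 : ℝ) < Real.exp (-x) := Real.exp_pos _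
    rw [hGGdef]
    simp only [pow_zero, pow_one, Nat.factorial_zero, Nat.factorial_one, Nat.cast_one, div_one,
      one_mul, abs_mul]
    rw [← hxdef, abs_of_nonneg hx0, abs_of_nonneg (le_of_lt he)]
    nlinarith [mul_le_mul_of_nonneg_right hφr
      (by positivity : (0:ℝ) ≤ Real.exp (-x) * (1 + x))]
  -- final assembly
  have hfinal : |(∑' k : ℕ, φ (((k : ℝ) + 1) / N) *
      (x ^ (k + 2) * Real.exp (-x) / (k + 2).factorial)) - φ r|
      ≤ ε / 2 + FF N + GG N := by
    rw [hdecomp]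
    have htri : |(∑' k : ℕ, (φ (((k : ℝ) + 1) / N) - φ r) *
        (x ^ (k + 2) * Real.exp (-x) / (k + 2).factorial))
        - φ r * (x ^ 0 * Real.exp (-x) / Nat.factorial 0)
        - φ r * (x ^ 1 * Real.exp (-x) / Nat.factorial 1)|
        ≤ |∑' k : ℕ, (φ (((k : ℝ) + 1) / N) - φ r) *
            (x ^ (k + 2) * Real.exp (-x) / (k + 2).factorial)|
          + |φ r * (x ^ 0 * Real.exp (-x) / Nat.factorial 0)|
          + |φ r * (x ^ 1 * Real.exp (-x) / Nat.factorial 1)| := by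
      have t1 := abs_sub (∑' k : ℕ, (φ (((k : ℝ) + 1) / N) - φ r) *
          (x ^ (k + 2) * Real.exp (-x) / (k + 2).factorial)
          - φ r * (x ^ 0 * Real.exp (-x) / Nat.factorial 0))
        (φ r * (x ^ 1 * Real.exp (-x) / Nat.factorial 1))
      have t2 := abs_sub (∑' k : ℕ, (φ (((k : ℝ) + 1) / N) - φ r) *
          (x ^ (k + 2) * Real.exp (-x) / (k + 2).factorial))
        (φ r * (x ^ 0 * Real.exp (-x) / Nat.factorial 0))
      linarith
    have := hsumu.trans_eq (by rw [hcoef_eq])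
    linarith
  calc |(∑' k : ℕ, φ (((k : ℝ) + 1) / N) *
      (x ^ (k + 2) * Real.exp (-x) / (k + 2).factorial)) - φ r|
      ≤ ε / 2 + FF N + GG N := hfinal
    _ < ε / 2 + ε / 2 := by linarith
    _ = ε := by ring


end Stmt10Aux

set_option maxHeartbeats 1000000 in
/-- Under assumption (H): `∫ (r ∨ r^p) μ(dr) < ∞` for some `1 < p < 2`,
for every continuous `φ : [0,∞) → ℝ` with `|φ(z)| ≤ C z`, one has
`π̃_{1,N}(φ) = ∑_{k≥1} φ(k/N) w_{k,N} → ∫ φ(z) μ(dz)` as `N → ∞`. -/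
theorem stmt10 (μ : Measure ℝ) [SigmaFinite μ]
    (p : ℝ) (hp1 : 1 < p) (hp2 : p < 2)
    (hH : Integrable (fun r => max r (r ^ p)) (μ.restrict (Set.Ioi 0)))
    (w : ℕ → ℕ → ℝ)
    (hw : ∀ N k : ℕ, 1 ≤ N → 1 ≤ k → w N k =
      (1 / (Nat.factorial (k + 1) : ℝ)) *
        ∫ r in Set.Ioi (0:ℝ), ((N:ℝ) * r) ^ (k + 1) * Real.exp (-(N:ℝ) * r) ∂μ)
    (φ : ℝ → ℝ) (hφcont : ContinuousOn φ (Set.Ici 0))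
    (Cφ : ℝ) (hφbound : ∀ z : ℝ, 0 ≤ z → |φ z| ≤ Cφ * z) :
    Filter.Tendsto (fun N : ℕ => ∑' k : ℕ, φ (((k:ℝ) + 1) / N) * w N (k + 1))
      Filter.atTop (nhds (∫ z in Set.Ioi (0:ℝ), φ z ∂μ)) := by
  classical
  have hC : 0 ≤ Cφ := by
    have h1 := hφbound 1 zero_le_one
    have h2 := abs_nonneg (φ 1)
    simpa using le_trans h2 h1
  have hw2 : ∀ N k : ℕ, 1 ≤ N → 1 ≤ k → w N k =
      (1 / (Nat.factorial (k + 1) : ℝ)) *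
        ∫ r in Set.Ioi (0:ℝ), ((N:ℝ) * r) ^ (k + 1) * Real.exp (-((N:ℝ) * r)) ∂μ := by
    simpa only [neg_mul] using hw
  have hbound_int : Integrable (fun z : ℝ => Cφ * max z (z ^ p))
      (μ.restrict (Set.Ioi 0)) := hH.const_mul Cφ
  -- the inner functions
  set F : ℕ → ℝ → ℝ := fun N z => ∑' k : ℕ, φ (((k : ℝ) + 1) / N) *
      (((N : ℝ) * z) ^ (k + 2) * Real.exp (-((N : ℝ) * z)) / (k + 2).factorial) with hFdef
  have hF0 : ∀ z : ℝ, F 0 z = 0 := by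
    intro z
    rw [hFdef]
    simp
  have hcont : ∀ (N k : ℕ), Continuous (fun z : ℝ => φ (((k : ℝ) + 1) / N) *
      (((N : ℝ) * z) ^ (k + 2) * Real.exp (-((N : ℝ) * z)) / (k + 2).factorial)) := by
    intro N k
    fun_prop
  have hFmeas : ∀ N : ℕ, AEStronglyMeasurable (F N) (μ.restrict (Set.Ioi 0)) := by
    intro N
    rcases Nat.eq_zero_or_pos N with h0 | hpos
    · subst h0
      have : F 0 = fun _ : ℝ => (0 : ℝ) := funext hF0
      rw [this]
      exact aestronglyMeasurable_const
    · refine aestronglyMeasurable_of_tendsto_ae (u := atTop)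
        (f := fun n : ℕ => fun z : ℝ => ∑ k ∈ Finset.range n, φ (((k : ℝ) + 1) / N) *
          (((N : ℝ) * z) ^ (k + 2) * Real.exp (-((N : ℝ) * z)) / (k + 2).factorial))
        (fun n => ?_) ?_
      · exact (continuous_finset_sum _ fun k _ => hcont N k).aestronglyMeasurable
      · filter_upwards [ae_restrict_mem measurableSet_Ioi] with z hz
        have hab := Stmt10Aux.abs_bound φ Cφ hC hφbound z hz N hpos
        have hsum : Summable (fun k : ℕ => φ (((k : ℝ) + 1) / N) *
            (((N : ℝ) * z) ^ (k + 2) * Real.exp (-((N : ℝ) * z)) / (k + 2).factorial)) := by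
          rw [← summable_abs_iff]
          exact hab.1
        rw [hFdef]
        exact hsum.hasSum.tendsto_sum_nat
  have hFbound : ∀ N : ℕ, ∀ᵐ z ∂(μ.restrict (Set.Ioi 0)),
      ‖F N z‖ ≤ Cφ * max z (z ^ p) := by
    intro N
    filter_upwards [ae_restrict_mem measurableSet_Ioi] with z hz
    have hz' : (0 : ℝ) < z := hz
    have hmaxz : z ≤ max z (z ^ p) := le_max_left _ _
    rcases Nat.eq_zero_or_pos N with h0 | hpos
    · subst h0
      rw [hF0]
      simp only [norm_zero]
      exact mul_nonneg hC (le_trans (le_of_lt hz') hmaxz)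
    · have hab := Stmt10Aux.abs_bound φ Cφ hC hφbound z hz' N hpos
      have h1 : ‖F N z‖ ≤ ∑' k : ℕ, |φ (((k : ℝ) + 1) / N) *
          (((N : ℝ) * z) ^ (k + 2) * Real.exp (-((N : ℝ) * z)) / (k + 2).factorial)| := by
        rw [hFdef]
        have := norm_tsum_le_tsum_norm (f := fun k : ℕ => φ (((k : ℝ) + 1) / N) *
          (((N : ℝ) * z) ^ (k + 2) * Real.exp (-((N : ℝ) * z)) / (k + 2).factorial))
          (by simpa only [Real.norm_eq_abs] using hab.1)
        simpa only [Real.norm_eq_abs] using this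
      calc ‖F N z‖ ≤ ∑' k : ℕ, |φ (((k : ℝ) + 1) / N) *
          (((N : ℝ) * z) ^ (k + 2) * Real.exp (-((N : ℝ) * z)) / (k + 2).factorial)| := h1
        _ ≤ Cφ * z := hab.2
        _ ≤ Cφ * max z (z ^ p) := mul_le_mul_of_nonneg_left hmaxz hC
  have hFconv : ∀ᵐ z ∂(μ.restrict (Set.Ioi 0)),
      Tendsto (fun N : ℕ => F N z) atTop (nhds (φ z)) := by
    filter_upwards [ae_restrict_mem measurableSet_Ioi] with z hz
    exact Stmt10Aux.pointwise φ hφcont Cφ hC hφbound z hz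
  have hDCT := tendsto_integral_of_dominated_convergence (μ := μ.restrict (Set.Ioi 0))
    (F := F) (f := φ) (fun z : ℝ => Cφ * max z (z ^ p)) hFmeas hbound_int hFbound hFconv
  refine Filter.Tendsto.congr' ?_ hDCT
  filter_upwards [eventually_ge_atTop 1] with N hN
  -- identify the integral of F N with the weighted sum
  have hmeask : ∀ k : ℕ, AEStronglyMeasurable (fun z : ℝ => φ (((k : ℝ) + 1) / N) *
      (((N : ℝ) * z) ^ (k + 2) * Real.exp (-((N : ℝ) * z)) / (k + 2).factorial))
      (μ.restrict (Set.Ioi 0)) := fun k => (hcont N k).aestronglyMeasurable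
  have hf' : (∑' k : ℕ, ∫⁻ z, ‖φ (((k : ℝ) + 1) / N) *
      (((N : ℝ) * z) ^ (k + 2) * Real.exp (-((N : ℝ) * z)) / (k + 2).factorial)‖₊
        ∂(μ.restrict (Set.Ioi 0))) ≠ ⊤ := by
    simp_rw [← enorm_eq_nnnorm]
    rw [← lintegral_tsum (fun k => (hmeask k).enorm)]
    have hb : ∀ᵐ z ∂(μ.restrict (Set.Ioi 0)), (∑' k : ℕ, (‖φ (((k : ℝ) + 1) / N) *
        (((N : ℝ) * z) ^ (k + 2) * Real.exp (-((N : ℝ) * z)) / (k + 2).factorial)‖₊ : ℝ≥0∞))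
        ≤ ‖Cφ * max z (z ^ p)‖₊ := by
      filter_upwards [ae_restrict_mem measurableSet_Ioi] with z hz
      have hab := Stmt10Aux.abs_bound φ Cφ hC hφbound z hz N hN
      calc (∑' k : ℕ, (‖φ (((k : ℝ) + 1) / N) *
          (((N : ℝ) * z) ^ (k + 2) * Real.exp (-((N : ℝ) * z)) / (k + 2).factorial)‖₊ : ℝ≥0∞))
          = ∑' k : ℕ, ENNReal.ofReal (|φ (((k : ℝ) + 1) / N) *
            (((N : ℝ) * z) ^ (k + 2) * Real.exp (-((N : ℝ) * z)) / (k + 2).factorial)|) :=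
            tsum_congr fun k => by rw [← enorm_eq_nnnorm, ← ofReal_norm_eq_enorm, Real.norm_eq_abs]
        _ = ENNReal.ofReal (∑' k : ℕ, |φ (((k : ℝ) + 1) / N) *
            (((N : ℝ) * z) ^ (k + 2) * Real.exp (-((N : ℝ) * z)) / (k + 2).factorial)|) :=
            (ENNReal.ofReal_tsum_of_nonneg (fun k => abs_nonneg _) hab.1).symm
        _ ≤ ENNReal.ofReal (Cφ * z) := ENNReal.ofReal_le_ofReal hab.2
        _ ≤ ENNReal.ofReal (Cφ * max z (z ^ p)) :=
            ENNReal.ofReal_le_ofReal (mul_le_mul_of_nonneg_left (le_max_left _ _) hC)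
        _ ≤ ‖Cφ * max z (z ^ p)‖₊ := Real.ofReal_le_enorm _
    refine ne_of_lt (lt_of_le_of_lt (lintegral_mono_ae hb) ?_)
    exact hbound_int.2
  have hker : ∀ k : ℕ, (∫ z in Set.Ioi (0:ℝ), φ (((k : ℝ) + 1) / N) *
      (((N : ℝ) * z) ^ (k + 2) * Real.exp (-((N : ℝ) * z)) / (k + 2).factorial) ∂μ)
      = φ (((k : ℝ) + 1) / N) * w N (k + 1) := by
    intro k
    have hw' : w N (k + 1) = (1 / ((k + 2).factorial : ℝ)) *
        ∫ z in Set.Ioi (0:ℝ), ((N:ℝ) * z) ^ (k + 2) * Real.exp (-((N:ℝ) * z)) ∂μ :=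
      hw2 N (k + 1) hN (Nat.le_add_left 1 k)
    rw [hw']
    rw [show (fun z : ℝ => φ (((k : ℝ) + 1) / N) *
        (((N : ℝ) * z) ^ (k + 2) * Real.exp (-((N : ℝ) * z)) / (k + 2).factorial))
        = fun z : ℝ => (φ (((k : ℝ) + 1) / N) * (1 / ((k + 2).factorial : ℝ))) *
          (((N : ℝ) * z) ^ (k + 2) * Real.exp (-((N : ℝ) * z))) from
      funext fun z => by ring]
    rw [MeasureTheory.integral_const_mul]
    ring
  calc (fun N : ℕ => ∫ z, F N z ∂(μ.restrict (Set.Ioi 0))) N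
      = ∫ z in Set.Ioi (0:ℝ), ∑' k : ℕ, φ (((k : ℝ) + 1) / N) *
        (((N : ℝ) * z) ^ (k + 2) * Real.exp (-((N : ℝ) * z)) / (k + 2).factorial) ∂μ := by
        rw [hFdef]
    _ = ∑' k : ℕ, ∫ z in Set.Ioi (0:ℝ), φ (((k : ℝ) + 1) / N) *
        (((N : ℝ) * z) ^ (k + 2) * Real.exp (-((N : ℝ) * z)) / (k + 2).factorial) ∂μ :=
        integral_tsum hmeask hf'
    _ = ∑' k : ℕ, φ (((k : ℝ) + 1) / N) * w N (k + 1) := tsum_congr hker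
end

section
/- Let μ be a σ-finite measure on (0,∞) satisfying assumption (H): ∫₀^∞ (r ∨ r^p) μ(dr) < ∞ for some 1 < p < 2. For N ≥ 1 and k ≥ 1 set w_{k,N} = (1/(k+1)!) ∫₀^∞ (Nr)^{k+1} e^{−Nr} μ(dr). Then for every continuous function ψ : [0,∞) → ℝ such that |ψ(z)| ≤ C (z² ∧ 1) for some constant C and all z ≥ 0, one has ∑_{k≥1} ψ(k/N) w_{k,N} → ∫₀^∞ ψ(z) μ(dz) as N → ∞. -/
open MeasureTheory Filter

namespace Stmt11Aux

/-! ### Exponential series facts -/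

lemma factorial_cast_ne (i : ℕ) : ((i.factorial : ℝ)) ≠ 0 := by
  exact_mod_cast i.factorial_ne_zero

lemma hasSum_exp_div (x : ℝ) :
    HasSum (fun j : ℕ => x ^ j / (j.factorial : ℝ)) (Real.exp x) := by
  rw [Real.exp_eq_exp_ℝ]
  exact NormedSpace.expSeries_div_hasSum_exp x

lemma hasSum_tail1 (x : ℝ) :
    HasSum (fun k : ℕ => x ^ (k + 1) / ((k + 1).factorial : ℝ)) (Real.exp x - 1) := by
  have h := (hasSum_nat_add_iff' (f := fun j : ℕ => x ^ j / (j.factorial : ℝ)) 1).2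
      (hasSum_exp_div x)
  simpa using h

lemma hasSum_tail2 {f : ℕ → ℝ} {a : ℝ} (hf : HasSum f a) :
    HasSum (fun k : ℕ => f (k + 2)) (a - (f 0 + f 1)) := by
  have h := (hasSum_nat_add_iff' (f := f) 2).2 hf
  simpa [Finset.sum_range_succ] using h

lemma hasSum_j (x : ℝ) :
    HasSum (fun j : ℕ => (j : ℝ) * x ^ j / (j.factorial : ℝ)) (x * Real.exp x) := by
  have key : ∀ i : ℕ, (((i + 1 : ℕ) : ℝ)) * x ^ (i + 1) / (((i + 1).factorial : ℝ))
      = x * (x ^ i / (i.factorial : ℝ)) := by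
    intro i
    have h1 : (((i + 1).factorial : ℝ)) = ((i : ℝ) + 1) * (i.factorial : ℝ) := by
      rw [Nat.factorial_succ]; push_cast; ring
    have h2 := factorial_cast_ne i
    rw [h1]
    have h3 : ((i : ℝ) + 1) ≠ 0 := by positivity
    push_cast
    field_simp
    ring
  have h0 : HasSum (fun i : ℕ => (((i + 1 : ℕ) : ℝ)) * x ^ (i + 1) / (((i + 1).factorial : ℝ)))
      (x * Real.exp x) := ((hasSum_exp_div x).mul_left x).congr_fun key
  have h := (hasSum_nat_add_iff
      (f := fun j : ℕ => (j : ℝ) * x ^ j / (j.factorial : ℝ)) 1).1 h0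
  simpa using h

lemma hasSum_jj (x : ℝ) :
    HasSum (fun j : ℕ => (j : ℝ) * ((j : ℝ) - 1) * x ^ j / (j.factorial : ℝ))
      (x ^ 2 * Real.exp x) := by
  have key : ∀ i : ℕ, (((i + 2 : ℕ) : ℝ)) * (((i + 2 : ℕ) : ℝ) - 1) * x ^ (i + 2)
        / (((i + 2).factorial : ℝ))
      = x ^ 2 * (x ^ i / (i.factorial : ℝ)) := by
    intro i
    have h1 : (((i + 2).factorial : ℝ)) = ((i : ℝ) + 2) * (((i : ℝ) + 1) * (i.factorial : ℝ)) := by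
      rw [show i + 2 = (i + 1) + 1 from rfl, Nat.factorial_succ, Nat.factorial_succ]
      push_cast; ring
    have h2 := factorial_cast_ne i
    have h3 : ((i : ℝ) + 2) ≠ 0 := by positivity
    have h4 : ((i : ℝ) + 1) ≠ 0 := by positivity
    rw [h1]
    push_cast
    field_simp
    ring
  have h0 : HasSum (fun i : ℕ => (((i + 2 : ℕ) : ℝ)) * (((i + 2 : ℕ) : ℝ) - 1) * x ^ (i + 2)
        / (((i + 2).factorial : ℝ))) (x ^ 2 * Real.exp x) :=
    ((hasSum_exp_div x).mul_left (x ^ 2)).congr_fun key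
  have h := (hasSum_nat_add_iff
      (f := fun j : ℕ => (j : ℝ) * ((j : ℝ) - 1) * x ^ j / (j.factorial : ℝ)) 2).1 h0
  simpa [Finset.sum_range_succ] using h

lemma hasSum_central (x : ℝ) :
    HasSum (fun j : ℕ => ((j : ℝ) - x) ^ 2 * x ^ j / (j.factorial : ℝ)) (x * Real.exp x) := by
  have h1 := hasSum_jj x
  have h2 := (hasSum_j x).mul_left (1 - 2 * x)
  have h3 := (hasSum_exp_div x).mul_left (x ^ 2)
  have h := (h1.add h2).add h3
  have key : ∀ j : ℕ, (j : ℝ) * ((j : ℝ) - 1) * x ^ j / (j.factorial : ℝ)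
        + (1 - 2 * x) * ((j : ℝ) * x ^ j / (j.factorial : ℝ))
        + x ^ 2 * (x ^ j / (j.factorial : ℝ))
      = ((j : ℝ) - x) ^ 2 * x ^ j / (j.factorial : ℝ) := by
    intro j; field_simp; ring
  have hval : x ^ 2 * Real.exp x + (1 - 2 * x) * (x * Real.exp x) + x ^ 2 * Real.exp x
      = x * Real.exp x := by ring
  rw [hval] at h
  exact h.congr_fun fun j => (key j).symm

/-! ### The main series -/

/-- The `k`-th term of the series: `ψ((k+1)/N) ⋅ (Nr)^{k+2} e^{-Nr} / (k+2)!`. -/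
noncomputable def term (ψ : ℝ → ℝ) (N : ℕ) (r : ℝ) (k : ℕ) : ℝ :=
  ψ (((k : ℝ) + 1) / N) *
    (((N : ℝ) * r) ^ (k + 2) * Real.exp (-((N : ℝ) * r)) / ((k + 2).factorial : ℝ))

noncomputable def Fs (ψ : ℝ → ℝ) (N : ℕ) (r : ℝ) : ℝ := ∑' k : ℕ, term ψ N r k

section Bounds

variable {ψ : ℝ → ℝ} {Cψ : ℝ}

lemma abs_psi_le (hb : ∀ z : ℝ, 0 ≤ z → |ψ z| ≤ Cψ * min (z ^ 2) 1) :
    ∀ z : ℝ, 0 ≤ z → |ψ z| ≤ Cψ := by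
  intro z hz
  have hC : 0 ≤ Cψ := by
    have h := hb 1 (by norm_num)
    have := abs_nonneg (ψ 1)
    simp only [one_pow, min_self, mul_one] at h
    linarith
  refine (hb z hz).trans ?_
  have : min (z ^ 2) 1 ≤ 1 := min_le_right _ _
  nlinarith

lemma Cψ_nonneg (hb : ∀ z : ℝ, 0 ≤ z → |ψ z| ≤ Cψ * min (z ^ 2) 1) : 0 ≤ Cψ := by
  have h := hb 1 (by norm_num)
  have := abs_nonneg (ψ 1)
  simp only [one_pow, min_self, mul_one] at h
  linarith

lemma abs_psi_le_lin (hb : ∀ z : ℝ, 0 ≤ z → |ψ z| ≤ Cψ * min (z ^ 2) 1) :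
    ∀ z : ℝ, 0 ≤ z → |ψ z| ≤ Cψ * z := by
  intro z hz
  refine (hb z hz).trans (mul_le_mul_of_nonneg_left ?_ (Cψ_nonneg hb))
  rcases le_total z 1 with h | h
  · refine (min_le_left _ _).trans ?_
    nlinarith
  · exact (min_le_right _ _).trans h

/-- Global summability (any real `r`, any `N`). -/
lemma summable_term (hb : ∀ z : ℝ, 0 ≤ z → |ψ z| ≤ Cψ * min (z ^ 2) 1)
    (N : ℕ) (r : ℝ) : Summable (fun k => term ψ N r k) := by
  have hC := Cψ_nonneg hb
  set x : ℝ := (N : ℝ) * r with hx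
  refine Summable.of_norm_bounded
      (g := fun k => Cψ * Real.exp (-x) * (|x| ^ (k + 2) / ((k + 2).factorial : ℝ))) ?_ ?_
  · have : Summable (fun k : ℕ => |x| ^ (k + 2) / ((k + 2).factorial : ℝ)) :=
      (summable_nat_add_iff 2).2 (Real.summable_pow_div_factorial |x|)
    exact this.mul_left _
  · intro k
    have hz : (0 : ℝ) ≤ ((k : ℝ) + 1) / N := by positivity
    have h1 : |ψ (((k : ℝ) + 1) / N)| ≤ Cψ := abs_psi_le hb _ hz
    have h2 : ‖term ψ N r k‖ = |ψ (((k : ℝ) + 1) / N)| *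
        (|x| ^ (k + 2) * Real.exp (-x) / ((k + 2).factorial : ℝ)) := by
      rw [Real.norm_eq_abs, term, abs_mul]
      congr 1
      rw [abs_div, abs_mul, abs_pow, abs_of_pos (Real.exp_pos _),
        Nat.abs_cast]
    rw [h2]
    have h3 : (0 : ℝ) ≤ |x| ^ (k + 2) * Real.exp (-x) / ((k + 2).factorial : ℝ) := by positivity
    calc |ψ (((k : ℝ) + 1) / N)| * (|x| ^ (k + 2) * Real.exp (-x) / ((k + 2).factorial : ℝ))
        ≤ Cψ * (|x| ^ (k + 2) * Real.exp (-x) / ((k + 2).factorial : ℝ)) :=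
          mul_le_mul_of_nonneg_right h1 h3
      _ = Cψ * Real.exp (-x) * (|x| ^ (k + 2) / ((k + 2).factorial : ℝ)) := by ring

/-- Termwise bound for `r ≥ 0`, `N ≥ 1`. -/
lemma term_abs_le (hb : ∀ z : ℝ, 0 ≤ z → |ψ z| ≤ Cψ * min (z ^ 2) 1)
    {N : ℕ} (hN : 1 ≤ N) {r : ℝ} (hr : 0 ≤ r) (k : ℕ) :
    |term ψ N r k| ≤ Cψ * r *
      (Real.exp (-((N : ℝ) * r)) * (((N : ℝ) * r) ^ (k + 1) / ((k + 1).factorial : ℝ))) := by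
  have hC := Cψ_nonneg hb
  have hN0 : (0 : ℝ) < N := by exact_mod_cast hN
  set x : ℝ := (N : ℝ) * r with hxdef
  have hx : 0 ≤ x := by positivity
  have hz : (0 : ℝ) ≤ ((k : ℝ) + 1) / N := by positivity
  have h2 : |term ψ N r k| = |ψ (((k : ℝ) + 1) / N)| *
      (x ^ (k + 2) * Real.exp (-x) / ((k + 2).factorial : ℝ)) := by
    rw [term, abs_mul]
    congr 1
    rw [abs_of_nonneg (by positivity)]
  rw [h2]
  have h3 : (0 : ℝ) ≤ x ^ (k + 2) * Real.exp (-x) / ((k + 2).factorial : ℝ) := by positivity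
  calc |ψ (((k : ℝ) + 1) / N)| * (x ^ (k + 2) * Real.exp (-x) / ((k + 2).factorial : ℝ))
      ≤ (Cψ * (((k : ℝ) + 1) / N)) * (x ^ (k + 2) * Real.exp (-x) / ((k + 2).factorial : ℝ)) :=
        mul_le_mul_of_nonneg_right (abs_psi_le_lin hb _ hz) h3
    _ ≤ Cψ * r * (Real.exp (-x) * (x ^ (k + 1) / ((k + 1).factorial : ℝ))) := by
        have hfac : (((k + 2).factorial : ℝ)) = ((k : ℝ) + 2) * ((k + 1).factorial : ℝ) := by
          rw [show k + 2 = (k + 1) + 1 from rfl, Nat.factorial_succ]; push_cast; ring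
        have hf1 := factorial_cast_ne (k + 1)
        have hxpow : x ^ (k + 2) = x ^ (k + 1) * ((N : ℝ) * r) := by
          rw [pow_succ]
        rw [hfac, hxpow]
        have hE : 0 ≤ Real.exp (-x) := (Real.exp_pos _).le
        have hxp : 0 ≤ x ^ (k + 1) := by positivity
        have hNne : ((N : ℝ)) ≠ 0 := hN0.ne'
        have hfpos : (0 : ℝ) < ((k + 1).factorial : ℝ) := by
          exact_mod_cast Nat.factorial_pos (k + 1)
        have hfrac : ((k : ℝ) + 1) / (((k : ℝ) + 2) * ((k + 1).factorial : ℝ))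
            ≤ 1 / ((k + 1).factorial : ℝ) := by
          rw [div_le_div_iff₀ (by positivity) (by positivity)]
          nlinarith
        have hLHS : Cψ * (((k : ℝ) + 1) / N)
              * (x ^ (k + 1) * ((N : ℝ) * r) * Real.exp (-x)
                / (((k : ℝ) + 2) * ((k + 1).factorial : ℝ)))
            = (Cψ * r * Real.exp (-x) * x ^ (k + 1))
              * (((k : ℝ) + 1) / (((k : ℝ) + 2) * ((k + 1).factorial : ℝ))) := by
          field_simp
        have hRHS : Cψ * r * (Real.exp (-x) * (x ^ (k + 1) / ((k + 1).factorial : ℝ)))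
            = (Cψ * r * Real.exp (-x) * x ^ (k + 1)) * (1 / ((k + 1).factorial : ℝ)) := by
          ring
        rw [hLHS, hRHS]
        exact mul_le_mul_of_nonneg_left hfrac (by positivity)
  
/-- Sum of absolute values is at most `Cψ r` (for `N ≥ 1`, `r ≥ 0`). -/
lemma tsum_abs_term_le (hb : ∀ z : ℝ, 0 ≤ z → |ψ z| ≤ Cψ * min (z ^ 2) 1)
    {N : ℕ} (hN : 1 ≤ N) {r : ℝ} (hr : 0 ≤ r) :
    ∑' k : ℕ, |term ψ N r k| ≤ Cψ * r := by
  have hC := Cψ_nonneg hb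
  set x : ℝ := (N : ℝ) * r with hxdef
  have hg : HasSum (fun k : ℕ => Cψ * r *
      (Real.exp (-x) * (x ^ (k + 1) / ((k + 1).factorial : ℝ))))
      (Cψ * r * (Real.exp (-x) * (Real.exp x - 1))) :=
    ((hasSum_tail1 x).mul_left (Real.exp (-x))).mul_left (Cψ * r)
  have hsum : Summable (fun k => |term ψ N r k|) := (summable_term hb N r).abs
  have h1 : ∑' k : ℕ, |term ψ N r k| ≤ Cψ * r * (Real.exp (-x) * (Real.exp x - 1)) := by
    rw [← hg.tsum_eq]
    exact Summable.tsum_le_tsum (fun k => term_abs_le hb hN hr k) hsum hg.summable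
  refine h1.trans ?_
  have hEe : Real.exp (-x) * Real.exp x = 1 := by
    rw [← Real.exp_add]; simp
  have hE : 0 < Real.exp (-x) := Real.exp_pos _
  nlinarith [mul_nonneg hC hr]

lemma abs_Fs_le (hb : ∀ z : ℝ, 0 ≤ z → |ψ z| ≤ Cψ * min (z ^ 2) 1)
    {N : ℕ} (hN : 1 ≤ N) {r : ℝ} (hr : 0 ≤ r) : |Fs ψ N r| ≤ Cψ * r := by
  have h := norm_tsum_le_tsum_norm (f := fun k => term ψ N r k)
      (by simpa [Real.norm_eq_abs] using (summable_term hb N r).abs)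
  rw [Real.norm_eq_abs] at h
  simp only [Real.norm_eq_abs] at h
  exact h.trans (tsum_abs_term_le hb hN hr)

lemma Fs_zero (r : ℝ) : Fs ψ 0 r = 0 := by
  have : ∀ k : ℕ, term ψ 0 r k = 0 := by
    intro k
    simp [term]
  simp [Fs, this]

lemma measurable_Fs (hb : ∀ z : ℝ, 0 ≤ z → |ψ z| ≤ Cψ * min (z ^ 2) 1) (N : ℕ) :
    Measurable (Fs ψ N) := by
  have hcont : ∀ k : ℕ, Continuous (fun r : ℝ => term ψ N r k) := by
    intro k
    unfold term
    fun_prop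
  have hmeas : ∀ n : ℕ, Measurable (fun r : ℝ => ∑ k ∈ Finset.range n, term ψ N r k) := by
    intro n
    exact Finset.measurable_sum _ fun k _ => (hcont k).measurable
  apply measurable_of_tendsto_metrizable hmeas
  rw [tendsto_pi_nhds]
  intro r
  exact (summable_term hb N r).hasSum.tendsto_sum_nat

end Bounds

/-! ### Pointwise convergence -/

section Pointwise

variable {ψ : ℝ → ℝ} {Cψ : ℝ}

lemma tendsto_Fs (hψcont : ContinuousOn ψ (Set.Ici 0))
    (hb : ∀ z : ℝ, 0 ≤ z → |ψ z| ≤ Cψ * min (z ^ 2) 1)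
    {r : ℝ} (hr : 0 < r) :
    Tendsto (fun N : ℕ => Fs ψ N r) atTop (nhds (ψ r)) := by
  have hC := Cψ_nonneg hb
  rw [Metric.tendsto_atTop]
  intro ε hε
  -- continuity at r
  have hcw : ContinuousWithinAt ψ (Set.Ici 0) r := hψcont r (Set.mem_Ici.mpr hr.le)
  rw [Metric.continuousWithinAt_iff] at hcw
  obtain ⟨δ, hδ, hδψ⟩ := hcw (ε / 2) (by positivity)
  set c : ℝ := 2 * Cψ / δ ^ 2 with hcdef
  have hc : 0 ≤ c := by positivity
  -- the error sequence tends to 0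
  have hE : Tendsto (fun N : ℕ => Cψ * (1 + (N : ℝ) * r) * Real.exp (-((N : ℝ) * r))
      + c * (2 * r / N + 2 / (N : ℝ) ^ 2)) atTop (nhds 0) := by
    have hxt : Tendsto (fun N : ℕ => (N : ℝ) * r) atTop atTop :=
      tendsto_natCast_atTop_atTop.atTop_mul_const hr
    have h1 : Tendsto (fun t : ℝ => Cψ * (1 + t) * Real.exp (-t)) atTop (nhds 0) := by
      have ha := Real.tendsto_exp_neg_atTop_nhds_zero
      have hb2 := Real.tendsto_pow_mul_exp_neg_atTop_nhds_zero 1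
      have h := (ha.add hb2).const_mul Cψ
      simp only [add_zero, mul_zero, zero_add] at h
      refine h.congr fun t => ?_
      simp only [pow_one]
      ring
    have h1' : Tendsto (fun N : ℕ => Cψ * (1 + (N : ℝ) * r) * Real.exp (-((N : ℝ) * r)))
        atTop (nhds 0) := h1.comp hxt
    have h2a : Tendsto (fun N : ℕ => 2 * r / (N : ℝ)) atTop (nhds 0) :=
      tendsto_const_div_atTop_nhds_zero_nat (2 * r)
    have h2b : Tendsto (fun N : ℕ => 2 / (N : ℝ) ^ 2) atTop (nhds 0) := by
      have h := (tendsto_const_div_atTop_nhds_zero_nat (2:ℝ)).div_atTop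
        tendsto_natCast_atTop_atTop
      refine h.congr fun N => ?_
      rw [div_div, ← sq]
    have h2 : Tendsto (fun N : ℕ => c * (2 * r / N + 2 / (N : ℝ) ^ 2)) atTop (nhds 0) := by
      have := ((h2a.add h2b).const_mul c)
      simpa using this
    simpa using h1'.add h2
  have hev : ∀ᶠ N : ℕ in atTop, Cψ * (1 + (N : ℝ) * r) * Real.exp (-((N : ℝ) * r))
      + c * (2 * r / N + 2 / (N : ℝ) ^ 2) < ε / 2 := by
    have h0 : (0 : ℝ) < ε / 2 := by positivity
    exact hE.eventually (eventually_lt_nhds h0)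
  rw [eventually_atTop] at hev
  obtain ⟨N₀, hN₀⟩ := hev
  refine ⟨max N₀ 1, fun N hN => ?_⟩
  have hN1 : 1 ≤ N := le_trans (le_max_right _ _) hN
  have hNN₀ : N₀ ≤ N := le_trans (le_max_left _ _) hN
  have hN0 : (0 : ℝ) < N := by exact_mod_cast hN1
  rw [Real.dist_eq]
  -- main estimate
  set x : ℝ := (N : ℝ) * r with hxdef
  have hx : 0 < x := by positivity
  set q : ℕ → ℝ := fun j => x ^ j * Real.exp (-x) / (j.factorial : ℝ) with hqdef
  have hq0 : ∀ j, 0 ≤ q j := fun j => by positivity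
  have hq : HasSum q 1 := by
    have h := (hasSum_exp_div x).mul_left (Real.exp (-x))
    have hEe : Real.exp (-x) * Real.exp x = 1 := by rw [← Real.exp_add]; simp
    rw [hEe] at h
    exact h.congr_fun fun j => by rw [hqdef]; ring
  have hqt : HasSum (fun k : ℕ => q (k + 2)) (1 - (q 0 + q 1)) := hasSum_tail2 hq
  have hterm : ∀ k : ℕ, term ψ N r k = ψ (((k : ℝ) + 1) / N) * q (k + 2) := by
    intro k; rw [term, hqdef]
  have hsummable : Summable (fun k => term ψ N r k) := summable_term hb N r
  have hFs : HasSum (fun k : ℕ => ψ (((k : ℝ) + 1) / N) * q (k + 2)) (Fs ψ N r) := by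
    have := hsummable.hasSum
    rw [show (∑' k, term ψ N r k) = Fs ψ N r from rfl] at this
    exact this.congr_fun fun k => (hterm k)
  have hdiff : HasSum (fun k : ℕ => (ψ (((k : ℝ) + 1) / N) - ψ r) * q (k + 2))
      (Fs ψ N r - ψ r * (1 - (q 0 + q 1))) := by
    have h := hFs.sub (hqt.mul_left (ψ r))
    exact h.congr_fun fun k => by ring
  -- pointwise continuity estimate
  have hpt : ∀ z : ℝ, 0 ≤ z → |ψ z - ψ r| ≤ ε / 2 + c * (z - r) ^ 2 := by
    intro z hz
    by_cases hcase : |z - r| < δ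
    · have := hδψ (Set.mem_Ici.mpr hz) (by rwa [Real.dist_eq])
      rw [Real.dist_eq] at this
      nlinarith [sq_nonneg (z - r), mul_nonneg hc (sq_nonneg (z - r))]
    · push_neg at hcase
      have h1 : δ ^ 2 ≤ (z - r) ^ 2 := by
        have := abs_nonneg (z - r)
        nlinarith [sq_abs (z - r)]
      have h2 : |ψ z - ψ r| ≤ 2 * Cψ := by
        have ha := abs_psi_le hb z hz
        have hbb := abs_psi_le hb r hr.le
        calc |ψ z - ψ r| ≤ |ψ z| + |ψ r| := abs_sub _ _
          _ ≤ 2 * Cψ := by linarith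
      have h3 : 2 * Cψ ≤ c * (z - r) ^ 2 := by
        have hceq : c * δ ^ 2 = 2 * Cψ := by
          rw [hcdef]; field_simp
        have h4 := mul_le_mul_of_nonneg_left h1 hc
        rw [hceq] at h4
        exact h4
      linarith
  -- the second-moment bound
  have hcentral : HasSum (fun j : ℕ => ((j : ℝ) - x) ^ 2 * q j) x := by
    have h := (hasSum_central x).mul_left (Real.exp (-x))
    have hEe : Real.exp (-x) * (x * Real.exp x) = x := by
      have h1 : Real.exp (-x) * Real.exp x = 1 := by rw [← Real.exp_add]; simp
      linear_combination x * h1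
    rw [hEe] at h
    exact h.congr_fun fun j => by rw [hqdef]; ring
  have hct : HasSum (fun k : ℕ => (((k + 2 : ℕ) : ℝ) - x) ^ 2 * q (k + 2))
      (x - (((0 : ℝ) - x) ^ 2 * q 0 + ((1 : ℝ) - x) ^ 2 * q 1)) := by
    have h := hasSum_tail2 hcentral
    simpa using h
  -- termwise moment bound
  have hvk : ∀ k : ℕ, (((k : ℝ) + 1) / N - r) ^ 2 * q (k + 2)
      ≤ (2 * (((k : ℝ) + 2) - x) ^ 2 + 2) / (N : ℝ) ^ 2 * q (k + 2) := by
    intro k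
    refine mul_le_mul_of_nonneg_right ?_ (hq0 _)
    have heq : ((k : ℝ) + 1) / N - r = ((((k : ℝ) + 2) - x) - 1) / N := by
      rw [hxdef]
      field_simp
      ring
    rw [heq, div_pow]
    rw [div_le_div_iff₀ (by positivity) (by positivity)]
    have hsq : ((((k : ℝ) + 2) - x) - 1) ^ 2 ≤ 2 * (((k : ℝ) + 2) - x) ^ 2 + 2 := by
      nlinarith [sq_nonneg ((((k : ℝ) + 2) - x) + 1)]
    nlinarith [sq_nonneg ((N : ℝ))]
  have hv : HasSum (fun k : ℕ => (2 * (((k : ℝ) + 2) - x) ^ 2 + 2) / (N : ℝ) ^ 2 * q (k + 2))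
      ((2 / (N : ℝ) ^ 2) * (x - (((0 : ℝ) - x) ^ 2 * q 0 + ((1 : ℝ) - x) ^ 2 * q 1))
        + (2 / (N : ℝ) ^ 2) * (1 - (q 0 + q 1))) := by
    have h := (hct.mul_left (2 / (N : ℝ) ^ 2)).add (hqt.mul_left (2 / (N : ℝ) ^ 2))
    refine h.congr_fun fun k => ?_
    push_cast
    field_simp
  have hmom_summ : Summable (fun k : ℕ => (((k : ℝ) + 1) / N - r) ^ 2 * q (k + 2)) := by
    refine Summable.of_nonneg_of_le (fun k => by positivity) hvk hv.summable
  have hmom : ∑' k : ℕ, (((k : ℝ) + 1) / N - r) ^ 2 * q (k + 2)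
      ≤ 2 * r / N + 2 / (N : ℝ) ^ 2 := by
    have h1 : ∑' k : ℕ, (((k : ℝ) + 1) / N - r) ^ 2 * q (k + 2)
        ≤ (2 / (N : ℝ) ^ 2) * (x - (((0 : ℝ) - x) ^ 2 * q 0 + ((1 : ℝ) - x) ^ 2 * q 1))
          + (2 / (N : ℝ) ^ 2) * (1 - (q 0 + q 1)) := by
      rw [← hv.tsum_eq]
      exact Summable.tsum_le_tsum hvk hmom_summ hv.summable
    refine h1.trans ?_
    have e1 : (0 : ℝ) ≤ ((0 : ℝ) - x) ^ 2 * q 0 + ((1 : ℝ) - x) ^ 2 * q 1 := by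
      have := hq0 0; have := hq0 1; positivity
    have e2 : (0 : ℝ) ≤ q 0 + q 1 := by have := hq0 0; have := hq0 1; linarith
    have e3 : (2 / (N : ℝ) ^ 2) * x = 2 * r / N := by
      rw [hxdef]; field_simp
    have h4 : (2 / (N : ℝ) ^ 2)
        * (x - (((0 : ℝ) - x) ^ 2 * q 0 + ((1 : ℝ) - x) ^ 2 * q 1))
        ≤ (2 / (N : ℝ) ^ 2) * x := by
      refine mul_le_mul_of_nonneg_left (by linarith) (by positivity)
    have h5 : (2 / (N : ℝ) ^ 2) * (1 - (q 0 + q 1)) ≤ (2 / (N : ℝ) ^ 2) * 1 := by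
      refine mul_le_mul_of_nonneg_left (by linarith) (by positivity)
    rw [e3] at h4
    rw [mul_one] at h5
    linarith
  -- bound the main sum
  have hu : HasSum (fun k : ℕ => (ε / 2) * q (k + 2) + c * ((((k : ℝ) + 1) / N - r) ^ 2 * q (k + 2)))
      ((ε / 2) * (1 - (q 0 + q 1)) + c * ∑' k : ℕ, (((k : ℝ) + 1) / N - r) ^ 2 * q (k + 2)) :=
    (hqt.mul_left (ε / 2)).add ((hmom_summ.hasSum).mul_left c)
  have habs_le : ∀ k : ℕ, |(ψ (((k : ℝ) + 1) / N) - ψ r) * q (k + 2)|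
      ≤ (ε / 2) * q (k + 2) + c * ((((k : ℝ) + 1) / N - r) ^ 2 * q (k + 2)) := by
    intro k
    rw [abs_mul, abs_of_nonneg (hq0 _)]
    have hz : (0 : ℝ) ≤ ((k : ℝ) + 1) / N := by positivity
    have := hpt (((k : ℝ) + 1) / N) hz
    have h := mul_le_mul_of_nonneg_right this (hq0 (k + 2))
    calc |ψ (((k : ℝ) + 1) / N) - ψ r| * q (k + 2)
        ≤ (ε / 2 + c * (((k : ℝ) + 1) / N - r) ^ 2) * q (k + 2) := h
      _ = (ε / 2) * q (k + 2) + c * ((((k : ℝ) + 1) / N - r) ^ 2 * q (k + 2)) := by ring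
  have habs_summ : Summable (fun k : ℕ => |(ψ (((k : ℝ) + 1) / N) - ψ r) * q (k + 2)|) :=
    Summable.of_nonneg_of_le (fun k => abs_nonneg _) habs_le hu.summable
  have hmain : |∑' k : ℕ, (ψ (((k : ℝ) + 1) / N) - ψ r) * q (k + 2)|
      ≤ ε / 2 + c * (2 * r / N + 2 / (N : ℝ) ^ 2) := by
    have h1 : |∑' k : ℕ, (ψ (((k : ℝ) + 1) / N) - ψ r) * q (k + 2)|
        ≤ ∑' k : ℕ, |(ψ (((k : ℝ) + 1) / N) - ψ r) * q (k + 2)| := by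
      have hns : Summable (fun k : ℕ => ‖(ψ (((k : ℝ) + 1) / N) - ψ r) * q (k + 2)‖) := by
        simpa only [Real.norm_eq_abs] using habs_summ
      have h := norm_tsum_le_tsum_norm hns
      simp only [Real.norm_eq_abs] at h
      exact h
    have h2 : ∑' k : ℕ, |(ψ (((k : ℝ) + 1) / N) - ψ r) * q (k + 2)|
        ≤ (ε / 2) * (1 - (q 0 + q 1)) + c * ∑' k : ℕ, (((k : ℝ) + 1) / N - r) ^ 2 * q (k + 2) := by
      rw [← hu.tsum_eq]
      exact Summable.tsum_le_tsum habs_le habs_summ hu.summable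
    have h3 : (ε / 2) * (1 - (q 0 + q 1)) ≤ ε / 2 := by
      have e2 : (0 : ℝ) ≤ q 0 + q 1 := by have := hq0 0; have := hq0 1; linarith
      nlinarith
    have h4 : c * ∑' k : ℕ, (((k : ℝ) + 1) / N - r) ^ 2 * q (k + 2)
        ≤ c * (2 * r / N + 2 / (N : ℝ) ^ 2) := mul_le_mul_of_nonneg_left hmom hc
    linarith
  -- the boundary term
  have hbdy : |ψ r * (q 0 + q 1)| ≤ Cψ * (1 + x) * Real.exp (-x) := by
    have hq01 : q 0 + q 1 = (1 + x) * Real.exp (-x) := by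
      rw [hqdef]
      simp [Nat.factorial]
      ring
    rw [abs_mul, hq01, abs_of_nonneg (by positivity : (0:ℝ) ≤ (1 + x) * Real.exp (-x))]
    have := abs_psi_le hb r hr.le
    have hpos : (0 : ℝ) ≤ (1 + x) * Real.exp (-x) := by positivity
    calc |ψ r| * ((1 + x) * Real.exp (-x)) ≤ Cψ * ((1 + x) * Real.exp (-x)) :=
        mul_le_mul_of_nonneg_right this hpos
      _ = Cψ * (1 + x) * Real.exp (-x) := by ring
  -- assemble
  have hsplit : Fs ψ N r - ψ r
      = (∑' k : ℕ, (ψ (((k : ℝ) + 1) / N) - ψ r) * q (k + 2)) - ψ r * (q 0 + q 1) := by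
    rw [hdiff.tsum_eq]
    ring
  rw [hsplit]
  have htri : |(∑' k : ℕ, (ψ (((k : ℝ) + 1) / N) - ψ r) * q (k + 2)) - ψ r * (q 0 + q 1)|
      ≤ |∑' k : ℕ, (ψ (((k : ℝ) + 1) / N) - ψ r) * q (k + 2)| + |ψ r * (q 0 + q 1)| :=
    abs_sub _ _
  have hEN := hN₀ N hNN₀
  calc |(∑' k : ℕ, (ψ (((k : ℝ) + 1) / N) - ψ r) * q (k + 2)) - ψ r * (q 0 + q 1)|
      ≤ |∑' k : ℕ, (ψ (((k : ℝ) + 1) / N) - ψ r) * q (k + 2)| + |ψ r * (q 0 + q 1)| := htri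
    _ ≤ (ε / 2 + c * (2 * r / N + 2 / (N : ℝ) ^ 2)) + Cψ * (1 + x) * Real.exp (-x) :=
        add_le_add hmain hbdy
    _ < ε / 2 + ε / 2 := by
        rw [hxdef]
        have : Cψ * (1 + (N : ℝ) * r) * Real.exp (-((N : ℝ) * r))
            + c * (2 * r / N + 2 / (N : ℝ) ^ 2) < ε / 2 := hEN
        linarith
    _ = ε := by ring

end Pointwise

end Stmt11Aux

open Stmt11Aux

/-- Under assumption (H), for every continuous `ψ : [0,∞) → ℝ` with
`|ψ(z)| ≤ C (z² ∧ 1)`, one has `∑_{k≥1} ψ(k/N) w_{k,N} → ∫ ψ(z) μ(dz)` as `N → ∞`. -/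
theorem stmt11 (μ : Measure ℝ) [SigmaFinite μ]
    (p : ℝ) (hp1 : 1 < p) (hp2 : p < 2)
    (hH : Integrable (fun r => max r (r ^ p)) (μ.restrict (Set.Ioi 0)))
    (w : ℕ → ℕ → ℝ)
    (hw : ∀ N k : ℕ, 1 ≤ N → 1 ≤ k → w N k =
      (1 / (Nat.factorial (k + 1) : ℝ)) *
        ∫ r in Set.Ioi (0:ℝ), ((N:ℝ) * r) ^ (k + 1) * Real.exp (-(N:ℝ) * r) ∂μ)
    (ψ : ℝ → ℝ) (hψcont : ContinuousOn ψ (Set.Ici 0))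
    (Cψ : ℝ) (hψbound : ∀ z : ℝ, 0 ≤ z → |ψ z| ≤ Cψ * min (z ^ 2) 1) :
    Filter.Tendsto (fun N : ℕ => ∑' k : ℕ, ψ (((k:ℝ) + 1) / N) * w N (k + 1))
      Filter.atTop (nhds (∫ z in Set.Ioi (0:ℝ), ψ z ∂μ)) := by
  have hC : 0 ≤ Cψ := Cψ_nonneg hψbound
  set ν := μ.restrict (Set.Ioi (0:ℝ)) with hν
  -- dominated convergence for the integrals of Fs
  have hDCT : Tendsto (fun N : ℕ => ∫ r, Fs ψ N r ∂ν) atTop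
      (nhds (∫ z in Set.Ioi (0:ℝ), ψ z ∂μ)) := by
    refine tendsto_integral_of_dominated_convergence (fun r => Cψ * max r (r ^ p))
      (fun N => ((measurable_Fs hψbound N).aestronglyMeasurable)) (hH.const_mul Cψ) ?_ ?_
    · intro N
      rw [hν, ae_restrict_iff' measurableSet_Ioi]
      refine Filter.Eventually.of_forall fun r hr => ?_
      have hr0 : (0 : ℝ) < r := hr
      have hmax : r ≤ max r (r ^ p) := le_max_left _ _
      rcases Nat.eq_zero_or_pos N with h0 | h1
      · subst h0
        rw [Fs_zero]
        simp only [norm_zero]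
        have : (0:ℝ) ≤ max r (r ^ p) := le_trans hr0.le hmax
        positivity
      · have := abs_Fs_le hψbound h1 hr0.le
        rw [Real.norm_eq_abs]
        refine this.trans ?_
        exact mul_le_mul_of_nonneg_left hmax hC
    · rw [hν, ae_restrict_iff' measurableSet_Ioi]
      refine Filter.Eventually.of_forall fun r hr => ?_
      exact tendsto_Fs hψcont hψbound hr
  -- identify the integrals with the sums, for N ≥ 1
  refine hDCT.congr' ?_
  filter_upwards [eventually_ge_atTop 1] with N hN
  -- interchange sum and integral
  have hmeas : ∀ k : ℕ, AEStronglyMeasurable (fun r : ℝ => term ψ N r k) ν := by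
    intro k
    have : Continuous (fun r : ℝ => term ψ N r k) := by unfold term; fun_prop
    exact this.aestronglyMeasurable
  have hfin : ∑' k : ℕ, ∫⁻ r, ‖term ψ N r k‖₊ ∂ν ≠ ⊤ := by
    rw [← lintegral_tsum (fun k => (hmeas k).aemeasurable.nnnorm.coe_nnreal_ennreal)]
    have hb2 : ∀ᵐ r ∂ν, ∑' k : ℕ, (‖term ψ N r k‖₊ : ENNReal)
        ≤ ENNReal.ofReal (Cψ * max r (r ^ p)) := by
      rw [hν, ae_restrict_iff' measurableSet_Ioi]
      refine Filter.Eventually.of_forall fun r hr => ?_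
      have hr0 : (0 : ℝ) < r := hr
      have h1 : ∑' k : ℕ, (‖term ψ N r k‖₊ : ENNReal)
          = ENNReal.ofReal (∑' k : ℕ, |term ψ N r k|) := by
        rw [ENNReal.ofReal_tsum_of_nonneg (fun k => abs_nonneg _)
          (summable_term hψbound N r).abs]
        congr 1
        funext k
        rw [← Real.norm_eq_abs, ofReal_norm, enorm_eq_nnnorm]
      rw [h1]
      refine ENNReal.ofReal_le_ofReal ?_
      refine (tsum_abs_term_le hψbound hN hr0.le).trans ?_
      exact mul_le_mul_of_nonneg_left (le_max_left _ _) hC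
    have hlt : ∫⁻ r, ∑' k : ℕ, (‖term ψ N r k‖₊ : ENNReal) ∂ν < ⊤ := by
      calc ∫⁻ r, ∑' k : ℕ, (‖term ψ N r k‖₊ : ENNReal) ∂ν
          ≤ ∫⁻ r, ENNReal.ofReal (Cψ * max r (r ^ p)) ∂ν := lintegral_mono_ae hb2
        _ ≤ ∫⁻ r, ‖Cψ * max r (r ^ p)‖₊ ∂ν :=
            lintegral_ofReal_le_lintegral_enorm _
        _ < ⊤ := (hH.const_mul Cψ).hasFiniteIntegral
    exact hlt.ne
  have hswap : ∫ r, Fs ψ N r ∂ν = ∑' k : ℕ, ∫ r, term ψ N r k ∂ν := by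
    unfold Fs
    exact integral_tsum hmeas hfin
  rw [hswap]
  refine tsum_congr fun k => ?_
  rw [hw N (k + 1) hN (Nat.le_add_left 1 k)]
  rw [← mul_assoc, ← integral_const_mul, hν]
  refine integral_congr_ae (Filter.Eventually.of_forall fun r => ?_)
  simp only [term, show k + 1 + 1 = k + 2 from rfl, neg_mul]
  ring
end

section
/- Let μ be a σ-finite measure on (0,∞) satisfying assumption (H): ∫₀^∞ (r ∨ r^p) μ(dr) < ∞ for some 1 < p < 2. For N ≥ 1 and k ≥ 1 set w_{k,N} = (1/(k+1)!) ∫₀^∞ (Nr)^{k+1} e^{−Nr} μ(dr), and let π̄_N be the measure on (0,∞) assigning mass ((k/N)² ∧ 1) w_{k,N} to the point k/N. Then for every ε > 0 there exists M > 0 such that limsup_{N→∞} π̄_N((M,∞)) = limsup_{N→∞} ∑_{k > NM} ((k/N)² ∧ 1) w_{k,N} ≤ ε/2. -/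
open MeasureTheory

lemma real_exp_tsum' (x : ℝ) : (∑' n : ℕ, x ^ n / n.factorial) = Real.exp x := by
  rw [Real.exp_eq_exp_ℝ, NormedSpace.exp_eq_tsum_div]

/-- Under assumption (H), for every `ε > 0` there exists `M > 0` such that
`limsup_N π̄_N((M,∞)) = limsup_N ∑_{k/N > M} ((k/N)² ∧ 1) w_{k,N} ≤ ε/2`. -/
theorem stmt12 (μ : Measure ℝ) [SigmaFinite μ]
    (p : ℝ) (hp1 : 1 < p) (hp2 : p < 2)
    (hH : Integrable (fun r => max r (r ^ p)) (μ.restrict (Set.Ioi 0)))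
    (w : ℕ → ℕ → ℝ)
    (hw : ∀ N k : ℕ, 1 ≤ N → 1 ≤ k → w N k =
      (1 / (Nat.factorial (k + 1) : ℝ)) *
        ∫ r in Set.Ioi (0:ℝ), ((N:ℝ) * r) ^ (k + 1) * Real.exp (-(N:ℝ) * r) ∂μ) :
    ∀ ε : ℝ, 0 < ε → ∃ M : ℝ, 0 < M ∧
      Filter.limsup
        (fun N : ℕ => ∑' k : ℕ,
          if M < ((k:ℝ) + 1) / N then
            ENNReal.ofReal (min ((((k:ℝ) + 1) / N) ^ 2) 1 * w N (k + 1))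
          else 0)
        Filter.atTop ≤ ENNReal.ofReal (ε / 2) := by
  intro ε hε
  -- integrability of r on (0,∞)
  have hr_int : Integrable (fun r : ℝ => r) (μ.restrict (Set.Ioi 0)) := by
    refine hH.mono aestronglyMeasurable_id ?_
    filter_upwards [ae_restrict_mem measurableSet_Ioi] with r hr
    have hr0 : (0:ℝ) < r := hr
    rw [Real.norm_eq_abs, Real.norm_eq_abs, abs_of_pos hr0,
      abs_of_pos (lt_of_lt_of_le hr0 (le_max_left _ _))]
    exact le_max_left _ _
  set C := ∫ r in Set.Ioi (0:ℝ), r ∂μ with hCdef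
  have hC0 : 0 ≤ C := setIntegral_nonneg measurableSet_Ioi (fun r hr => le_of_lt hr)
  set M := 2 * C / ε + 1 with hMdef
  have hM0 : 0 < M := by positivity
  refine ⟨M, hM0, ?_⟩
  have hCM : C / M ≤ ε / 2 := by
    rw [div_le_iff₀ hM0, hMdef]
    have h1 : ε / 2 * (2 * C / ε + 1) = C + ε / 2 := by field_simp
    rw [h1]; linarith
  -- key bound for each N ≥ 1
  have key : ∀ N : ℕ, 1 ≤ N →
      (∑' k : ℕ,
          if M < ((k:ℝ) + 1) / N then
            ENNReal.ofReal (min ((((k:ℝ) + 1) / N) ^ 2) 1 * w N (k + 1))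
          else 0) ≤ ENNReal.ofReal (ε / 2) := by
    intro N hN
    set n : ℝ := (N : ℝ) with hndef
    have hn : (0:ℝ) < n := Nat.cast_pos.mpr hN
    -- the comparison functions
    set G : ℕ → ℝ → ENNReal :=
      fun j r => ENNReal.ofReal (r * ((n * r) ^ j / (j.factorial : ℝ)) * Real.exp (-n * r))
      with hGdef
    have hGmeas : ∀ j, Measurable (G j) := by
      intro j
      apply Measurable.ennreal_ofReal
      fun_prop
    -- termwise bound
    have hterm : ∀ k : ℕ,
        (if M < ((k:ℝ) + 1) / N then
            ENNReal.ofReal (min ((((k:ℝ) + 1) / N) ^ 2) 1 * w N (k + 1))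
          else 0)
          ≤ ENNReal.ofReal (1 / M) * ∫⁻ r in Set.Ioi (0:ℝ), G (k + 1) r ∂μ := by
      intro k
      by_cases hMk : M < ((k:ℝ) + 1) / N
      · rw [if_pos hMk]
        set c : ℝ := ((k + 1).factorial : ℝ) with hcdef
        have hc0 : (0:ℝ) < c := Nat.cast_pos.mpr (k+1).factorial_pos
        set I := ∫ r in Set.Ioi (0:ℝ), ((N:ℝ) * r) ^ (k + 1 + 1) * Real.exp (-(N:ℝ) * r) ∂μ
          with hIdef
        have hI0 : 0 ≤ I := by
          apply setIntegral_nonneg measurableSet_Ioi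
          intro r hr
          exact mul_nonneg (pow_nonneg (mul_nonneg hn.le (le_of_lt hr)) _) (Real.exp_pos _).le
        have hwN : w N (k + 1) = (1 / ((k + 1 + 1).factorial : ℝ)) * I :=
          hw N (k + 1) hN (Nat.le_add_left 1 k)
        have hw0 : 0 ≤ w N (k + 1) := by
          rw [hwN]; positivity
        -- real-number estimate
        have hMn : M * n < (k:ℝ) + 1 := (lt_div_iff₀ hn).mp hMk
        set J := ∫ r in Set.Ioi (0:ℝ), r * ((n * r) ^ (k + 1) / c) * Real.exp (-n * r) ∂μ
          with hJdef
        have hJI : J = (1 / (n * c)) * I := by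
          rw [hJdef, hIdef, ← integral_const_mul]
          apply integral_congr_ae
          filter_upwards with r
          rw [pow_succ ((N:ℝ) * r) (k + 1)]
          have hne : n ≠ 0 := ne_of_gt hn
          have hcne : c ≠ 0 := ne_of_gt hc0
          rw [hndef]
          field_simp
        have hreal : min ((((k:ℝ) + 1) / N) ^ 2) 1 * w N (k + 1) ≤ (1 / M) * J := by
          have h1 : min ((((k:ℝ) + 1) / N) ^ 2) 1 * w N (k + 1) ≤ w N (k + 1) :=
            mul_le_of_le_one_left hw0 (min_le_right _ _)
          have hfc : ((k + 1 + 1).factorial : ℝ) = ((k:ℝ) + 1 + 1) * c := by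
            rw [hcdef]; push_cast [Nat.factorial_succ (k+1)]; ring
          have h2 : w N (k + 1) ≤ (1 / M) * J := by
            rw [hwN, hJI, ← mul_assoc]
            apply mul_le_mul_of_nonneg_right _ hI0
            simp only [one_div, ← mul_inv]
            apply inv_anti₀
            · positivity
            · rw [hfc]
              have : M * (n * c) = (M * n) * c := by ring
              rw [this]
              apply mul_le_mul_of_nonneg_right _ hc0.le
              linarith
          linarith
        calc ENNReal.ofReal (min ((((k:ℝ) + 1) / N) ^ 2) 1 * w N (k + 1))
            ≤ ENNReal.ofReal ((1 / M) * J) := ENNReal.ofReal_le_ofReal hreal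
          _ = ENNReal.ofReal (1 / M) * ENNReal.ofReal J := ENNReal.ofReal_mul (by positivity)
          _ ≤ ENNReal.ofReal (1 / M) * ∫⁻ r in Set.Ioi (0:ℝ), G (k + 1) r ∂μ := by
              apply mul_le_mul_right
              by_cases hint : Integrable
                  (fun r => r * ((n * r) ^ (k + 1) / c) * Real.exp (-n * r))
                  (μ.restrict (Set.Ioi 0))
              · rw [hJdef,
                  ofReal_integral_eq_lintegral_ofReal hint ?_]
                filter_upwards [ae_restrict_mem measurableSet_Ioi] with r hr
                have hr0 : (0:ℝ) < r := hr
                have : (0:ℝ) ≤ (n * r) ^ (k+1) / c :=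
                  div_nonneg (pow_nonneg (mul_nonneg hn.le hr0.le) _) hc0.le
                exact mul_nonneg (mul_nonneg hr0.le this) (Real.exp_pos _).le
              · rw [hJdef, integral_undef hint]
                simp
      · rw [if_neg hMk]
        exact zero_le
    -- pointwise bound for the summed comparison function
    have hpt : ∀ r ∈ Set.Ioi (0:ℝ), (∑' k : ℕ, G (k + 1) r) ≤ ENNReal.ofReal r := by
      intro r hr
      have hr0 : (0:ℝ) < r := hr
      have hle : (∑' k : ℕ, G (k + 1) r) ≤ ∑' j : ℕ, G j r :=
        ENNReal.tsum_comp_le_tsum_of_injective (add_left_injective 1) (fun j => G j r)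
      refine le_trans hle ?_
      have hnn : ∀ j : ℕ, 0 ≤ r * ((n * r) ^ j / (j.factorial : ℝ)) * Real.exp (-n * r) := by
        intro j
        exact mul_nonneg (mul_nonneg hr0.le
          (div_nonneg (pow_nonneg (mul_nonneg hn.le hr0.le) _) (Nat.cast_nonneg _)))
          (Real.exp_pos _).le
      have heq : (fun j : ℕ => r * ((n * r) ^ j / (j.factorial : ℝ)) * Real.exp (-n * r))
          = fun j : ℕ => ((n * r) ^ j / (j.factorial : ℝ)) * (r * Real.exp (-n * r)) := by
        funext j; ring
      have hsumm : Summable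
          (fun j : ℕ => r * ((n * r) ^ j / (j.factorial : ℝ)) * Real.exp (-n * r)) := by
        rw [heq]
        exact (Real.summable_pow_div_factorial (n * r)).mul_right _
      have htsum : (∑' j : ℕ, r * ((n * r) ^ j / (j.factorial : ℝ)) * Real.exp (-n * r)) = r := by
        rw [heq, tsum_mul_right, real_exp_tsum', neg_mul, Real.exp_neg]
        field_simp
      rw [hGdef]
      simp only
      rw [← ENNReal.ofReal_tsum_of_nonneg hnn hsumm, htsum]
    -- put everything together
    calc (∑' k : ℕ,
          if M < ((k:ℝ) + 1) / N then
            ENNReal.ofReal (min ((((k:ℝ) + 1) / N) ^ 2) 1 * w N (k + 1))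
          else 0)
        ≤ ∑' k : ℕ, ENNReal.ofReal (1 / M) * ∫⁻ r in Set.Ioi (0:ℝ), G (k + 1) r ∂μ :=
          ENNReal.tsum_le_tsum hterm
      _ = ENNReal.ofReal (1 / M) * ∑' k : ℕ, ∫⁻ r in Set.Ioi (0:ℝ), G (k + 1) r ∂μ :=
          ENNReal.tsum_mul_left
      _ = ENNReal.ofReal (1 / M) * ∫⁻ r in Set.Ioi (0:ℝ), (∑' k : ℕ, G (k + 1) r) ∂μ := by
          rw [lintegral_tsum (fun k => (hGmeas (k + 1)).aemeasurable)]
      _ ≤ ENNReal.ofReal (1 / M) * ∫⁻ r in Set.Ioi (0:ℝ), ENNReal.ofReal r ∂μ := by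
          apply mul_le_mul_right
          apply lintegral_mono_ae
          filter_upwards [ae_restrict_mem measurableSet_Ioi] with r hr
          exact hpt r hr
      _ = ENNReal.ofReal (1 / M) * ENNReal.ofReal C := by
          rw [hCdef, ofReal_integral_eq_lintegral_ofReal hr_int ?_]
          filter_upwards [ae_restrict_mem measurableSet_Ioi] with r hr
          exact le_of_lt hr
      _ = ENNReal.ofReal (C / M) := by
          rw [← ENNReal.ofReal_mul (by positivity), one_div, inv_mul_eq_div]
      _ ≤ ENNReal.ofReal (ε / 2) := ENNReal.ofReal_le_ofReal hCM
  apply Filter.limsup_le_of_le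
  · isBoundedDefault
  · exact Filter.eventually_atTop.mpr ⟨1, key⟩
end
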